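/- arXiv:1511.04032 — 7 statements merged into one kernel-verified Lean document; each statement's English description precedes it below -/
import Mathlib

section
/- If p is any vector of Walrasian prices and x is any welfare-maximizing valid allocation, then (p, x) forms a Walrasian equilibrium, i.e., x_i ∈ D(v_i, p) for every buyer i (Second Welfare Theorem). -/
open Finset

/-- **Second Welfare Theorem.** If `p` is any vector of Walrasian prices (i.e. it supports
some market-clearing demanded allocation `y`) and `x` is any welfare-maximizing valid
allocation, then `(p, x)` is a Walrasian equilibrium: each `x i` lies in the demand set
`D(v i, p)`. -/
theorem second_welfare_theorem
    (m n : ℕ) (s : Fin n → ℕ)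
    (v : Fin m → (Fin n → ℕ) → ℤ) (p : Fin n → ℝ)
    (hWalrasian : ∃ y : Fin m → Fin n → ℕ,
      (∀ i j, y i j ≤ s j) ∧ (∀ j, ∑ i, y i j = s j) ∧
      ∀ i, ∀ z : Fin n → ℕ, (∀ j, z j ≤ s j) →
        (v i z : ℝ) - ∑ j, p j * (z j : ℝ) ≤ (v i (y i) : ℝ) - ∑ j, p j * (y i j : ℝ))
    (x : Fin m → Fin n → ℕ)
    (hxb : ∀ i j, x i j ≤ s j)
    (hxvalid : ∀ j, ∑ i, x i j = s j)
    (hxopt : ∀ y' : Fin m → Fin n → ℕ,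
      (∀ i j, y' i j ≤ s j) → (∀ j, ∑ i, y' i j = s j) →
      ∑ i, v i (y' i) ≤ ∑ i, v i (x i)) :
    ∀ i, ∀ z : Fin n → ℕ, (∀ j, z j ≤ s j) →
      (v i z : ℝ) - ∑ j, p j * (z j : ℝ) ≤ (v i (x i) : ℝ) - ∑ j, p j * (x i j : ℝ) := by
  obtain ⟨y, hyb, hyvalid, hyD⟩ := hWalrasian
  -- f i = utility gap between y i and x i, nonnegative since y i is demanded
  set f : Fin m → ℝ := fun i =>
    ((v i (y i) : ℝ) - ∑ j, p j * (y i j : ℝ)) -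
      ((v i (x i) : ℝ) - ∑ j, p j * (x i j : ℝ)) with hf
  have hfnn : ∀ i ∈ Finset.univ, 0 ≤ f i := by
    intro i _
    have := hyD i (x i) (hxb i)
    simp only [hf]
    linarith
  -- price totals coincide
  have hprice : ∑ i, ∑ j, p j * (x i j : ℝ) = ∑ i, ∑ j, p j * (y i j : ℝ) := by
    rw [Finset.sum_comm]
    nth_rewrite 2 [Finset.sum_comm]
    refine Finset.sum_congr rfl fun j _ => ?_
    rw [← Finset.mul_sum, ← Finset.mul_sum]
    congr 1
    have hx : ∑ i, (x i j : ℝ) = (s j : ℝ) := by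
      rw [← Nat.cast_sum]; exact_mod_cast congrArg (Nat.cast : ℕ → ℝ) (hxvalid j)
    have hy : ∑ i, (y i j : ℝ) = (s j : ℝ) := by
      rw [← Nat.cast_sum]; exact_mod_cast congrArg (Nat.cast : ℕ → ℝ) (hyvalid j)
    rw [hx, hy]
  -- welfare comparison
  have hw : ∑ i, (v i (y i) : ℝ) ≤ ∑ i, (v i (x i) : ℝ) := by
    have := hxopt y hyb hyvalid
    have : ((∑ i, v i (y i) : ℤ) : ℝ) ≤ ((∑ i, v i (x i) : ℤ) : ℝ) := by exact_mod_cast this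
    simpa [Int.cast_sum] using this
  have hsum : ∑ i, f i ≤ 0 := by
    have : ∑ i, f i = (∑ i, (v i (y i) : ℝ) - ∑ i, (v i (x i) : ℝ))
        + (∑ i, ∑ j, p j * (x i j : ℝ) - ∑ i, ∑ j, p j * (y i j : ℝ)) := by
      simp only [hf, Finset.sum_sub_distrib]
      ring
    rw [this, hprice]
    linarith
  have hzero : ∀ i, f i = 0 := by
    intro i
    have hle : ∑ i, f i = 0 := le_antisymm hsum (Finset.sum_nonneg hfnn)
    exact (Finset.sum_eq_zero_iff_of_nonneg hfnn).mp hle i (Finset.mem_univ i)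
  intro i z hz
  have h1 := hyD i z hz
  have h2 := hzero i
  simp only [hf] at h2
  linarith
end

section
/- If there is more than one buyer and a Walrasian equilibrium exists, then every vector of Walrasian prices p satisfies -2M ≤ p_j ≤ 2M for all items j, where M = max_i max_x |v_i(x)|. -/
open Finset

/-- If there are at least two buyers, every item has positive supply, valuations vanish on
the empty bundle and are bounded by `M` in absolute value, then every vector of Walrasian
prices `p` satisfies `-2M ≤ p j ≤ 2M` for every item `j`. -/
theorem walrasian_prices_bounded
    (m n : ℕ) (hm : 2 ≤ m) (s : Fin n → ℕ) (hs : ∀ j, 1 ≤ s j)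
    (v : Fin m → (Fin n → ℕ) → ℤ) (hv0 : ∀ i, v i 0 = 0)
    (M : ℤ) (hM : ∀ i (x : Fin n → ℕ), (∀ j, x j ≤ s j) → |v i x| ≤ M)
    (p : Fin n → ℝ)
    (hW : ∃ x : Fin m → Fin n → ℕ,
      (∀ i j, x i j ≤ s j) ∧ (∀ j, ∑ i, x i j = s j) ∧
      ∀ i, ∀ z : Fin n → ℕ, (∀ j, z j ≤ s j) →
        (v i z : ℝ) - ∑ j, p j * (z j : ℝ) ≤ (v i (x i) : ℝ) - ∑ j, p j * (x i j : ℝ)) :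
    ∀ j, -(2 * (M : ℝ)) ≤ p j ∧ p j ≤ 2 * (M : ℝ) := by
  obtain ⟨x, hxs, hsum, hopt⟩ := hW
  intro j
  -- some buyer holds a unit of item j
  have hex : ∃ i, 1 ≤ x i j := by
    by_contra h
    push_neg at h
    have h0 : ∑ i, x i j = 0 := Finset.sum_eq_zero (fun i _ => by have := h i; omega)
    have := hs j
    rw [hsum j] at h0
    omega
  obtain ⟨i, hi⟩ := hex
  haveI : Nontrivial (Fin m) := Fin.nontrivial_iff_two_le.mpr hm
  obtain ⟨k, hk⟩ := exists_ne i
  have hklt : x k j < s j := by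
    have hpair : x i j + x k j ≤ ∑ i', x i' j := by
      calc x i j + x k j = ∑ i' ∈ ({i, k} : Finset (Fin m)), x i' j := by
            rw [Finset.sum_pair (Ne.symm hk)]
        _ ≤ ∑ i', x i' j := Finset.sum_le_sum_of_subset (Finset.subset_univ _)
    have := hsum j
    omega
  -- key sum computation
  have key : ∀ (a b : Fin n → ℕ), (∀ j', j' ≠ j → a j' = b j') →
      (∑ j', p j' * (a j' : ℝ)) - ∑ j', p j' * (b j' : ℝ) = p j * ((a j : ℝ) - (b j : ℝ)) := by
    intro a b hab
    rw [← Finset.sum_sub_distrib, Finset.sum_eq_single j]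
    · ring
    · intro b' _ hb'
      rw [hab b' hb']
      ring
    · simp
  have hMv : ∀ (i' : Fin m) (y : Fin n → ℕ), (∀ j', y j' ≤ s j') → |(v i' y : ℝ)| ≤ (M : ℝ) := by
    intro i' y hy
    have := hM i' y hy
    calc |(v i' y : ℝ)| = ((|v i' y| : ℤ) : ℝ) := by push_cast; rfl
      _ ≤ (M : ℝ) := by exact_mod_cast this
  constructor
  · -- lower bound via buyer k buying one more unit of j
    set z := Function.update (x k) j (x k j + 1) with hz
    have hzle : ∀ j', z j' ≤ s j' := by
      intro j'
      by_cases h : j' = j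
      · subst h; simp [hz]; omega
      · simp [hz, Function.update_of_ne h]; exact hxs k j'
    have hzj : z j = x k j + 1 := by simp [hz]
    have hzoff : ∀ j', j' ≠ j → x k j' = z j' := by
      intro j' h; simp [hz, Function.update_of_ne h]
    have h1 := hopt k z hzle
    have h2 := key (x k) z hzoff
    have h3 : (∑ j', p j' * (x k j' : ℝ)) - ∑ j', p j' * (z j' : ℝ) = -p j := by
      rw [h2, hzj]; push_cast; ring
    have hb1 := hMv k (x k) (hxs k)
    have hb2 := hMv k z hzle
    have : -p j ≤ (v k (x k) : ℝ) - (v k z : ℝ) := by linarith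
    have habs : (v k (x k) : ℝ) - (v k z : ℝ) ≤ 2 * (M : ℝ) := by
      have := abs_le.mp hb1
      have := abs_le.mp hb2
      linarith [this.1, this.2]
    linarith [abs_le.mp hb1, abs_le.mp hb2]
  · -- upper bound via buyer i dropping one unit of j
    set z := Function.update (x i) j (x i j - 1) with hz
    have hzle : ∀ j', z j' ≤ s j' := by
      intro j'
      by_cases h : j' = j
      · subst h; simp [hz]; have := hxs i j'; omega
      · simp [hz, Function.update_of_ne h]; exact hxs i j'
    have hzj : (z j : ℝ) = (x i j : ℝ) - 1 := by
      simp [hz]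
      rw [Nat.cast_sub hi]
      simp
    have hzoff : ∀ j', j' ≠ j → x i j' = z j' := by
      intro j' h; simp [hz, Function.update_of_ne h]
    have h1 := hopt i z hzle
    have h2 := key (x i) z hzoff
    have h3 : (∑ j', p j' * (x i j' : ℝ)) - ∑ j', p j' * (z j' : ℝ) = p j := by
      rw [h2, hzj]; ring
    have hb1 := hMv i (x i) (hxs i)
    have hb2 := hMv i z hzle
    linarith [abs_le.mp hb1, abs_le.mp hb2]
end

section
/- The set of Walrasian prices is a polytope whose vertices have rational coordinates p_j = a_j/b_j with integers a_j, b_j satisfying 1 ≤ b_j ≤ n! · S^n ≤ (Sn)^n, where S = max_j s_j. -/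
/-!
Any allocation supported by Walrasian prices maximises total value, so at every Walrasian price
vector `q` each buyer is indifferent between his bundle in any two such allocations. Hence the
Walrasian prices are exactly the prices supporting one fixed allocation `x`, i.e. the polyhedron
`{p | v i z - v i (x i) ≤ p ⬝ (z - x i)}` with integer rows `z - x i` of entries at most `S` in
absolute value. At a vertex the tight rows have full rank, so `p` solves a nonsingular `n × n`
integer subsystem `M p = c`; Cramer's rule gives `p j = a j / det M`, and the Leibniz formula
gives `|det M| ≤ n! S^n`.
-/

open Finset Matrix Filter Topology

theorem Matrix.eq_intCast_adjugate_mulVec_div_det {σ : Type*} [Fintype σ] [DecidableEq σ]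
    {M : Matrix σ σ ℤ} (hM : M.det ≠ 0) {p : σ → ℝ} {b : σ → ℤ}
    (h : M.map (Int.cast : ℤ → ℝ) *ᵥ p = fun j => (b j : ℝ)) (j : σ) :
    p j = ((M.adjugate *ᵥ b) j : ℝ) / (M.det : ℝ) := by
  have hdet : (M.map (Int.cast : ℤ → ℝ)).det = M.det := (Int.cast_det M).symm
  have hadj : (M.map (Int.cast : ℤ → ℝ)).adjugate = M.adjugate.map Int.cast :=
    (RingHom.map_adjugate (Int.castRingHom ℝ) M).symm
  have hsolve : (M.det : ℝ) • p = (M.map Int.cast).adjugate *ᵥ fun j => (b j : ℝ) := by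
    rw [← h, mulVec_mulVec, adjugate_mul, hdet, smul_mulVec, one_mulVec]
  rw [eq_div_iff (by exact_mod_cast hM), mul_comm, ← smul_eq_mul, ← Pi.smul_apply, hsolve, hadj]
  exact ((Int.castRingHom ℝ).map_mulVec M.adjugate b j).symm

theorem exists_int_div_of_abs_den_le {x : ℝ} {a b B : ℤ} (hb : b ≠ 0) (hbB : |b| ≤ B)
    (hx : x = a / b) : ∃ a' b' : ℤ, 1 ≤ b' ∧ b' ≤ B ∧ x = a' / b' := by
  refine ⟨b.sign * a, |b|, abs_pos.mpr hb, hbB, ?_⟩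
  have hsign : (b.sign : ℝ) ≠ 0 := by exact_mod_cast Int.sign_eq_zero_iff_zero.not.mpr hb
  rw [hx, ← Int.sign_mul_self_eq_abs, Int.cast_mul, Int.cast_mul, mul_div_mul_left _ _ hsign]

theorem Matrix.exists_isUnit_det_submatrix_of_injective_mulVec {K κ σ : Type*} [Field K]
    [Finite κ] [Fintype σ] [DecidableEq σ] (B : Matrix κ σ K)
    (hB : Function.Injective B.mulVec) : ∃ e : σ → κ, IsUnit (B.submatrix e id).det := by
  classical
  obtain ⟨τ, a, -, hspan, hli⟩ := exists_linearIndependent' K B.row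
  have := hli.finite
  have := Fintype.ofFinite τ
  have hcard : Fintype.card τ = Fintype.card σ := by
    rw [← finrank_span_eq_card hli, hspan, ← rank_eq_finrank_span_row, rank,
      LinearMap.finrank_range_of_inj hB, Module.finrank_fintype_fun_eq_card]
  let e : σ ≃ τ := Fintype.equivOfCardEq hcard.symm
  refine ⟨a ∘ e, (isUnit_iff_isUnit_det _).mp (linearIndependent_rows_iff_isUnit.mp ?_)⟩
  exact hli.comp e e.injective

section Polyhedron

variable {ι σ : Type*} [Fintype σ]

def polyhedron (A : Matrix ι σ ℝ) (c : ι → ℝ) : Set (σ → ℝ) := {q | c ≤ A *ᵥ q}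

variable {A : Matrix ι σ ℝ} {c : ι → ℝ} {p d : σ → ℝ}

theorem convex_polyhedron : Convex ℝ (polyhedron A c) :=
  (convex_Ici c).linear_preimage A.mulVecLin

theorem exists_add_smul_mem_polyhedron_and_sub_smul_mem [Finite ι] (hp : p ∈ polyhedron A c)
    (hd : ∀ k, (A *ᵥ p) k = c k → (A *ᵥ d) k = 0) :
    ∃ ε : ℝ, 0 < ε ∧ p + ε • d ∈ polyhedron A c ∧ p - ε • d ∈ polyhedron A c := by
  have hline : ∀ t : ℝ, A *ᵥ (p + t • d) = A *ᵥ p + t • A *ᵥ d := fun t => by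
    rw [mulVec_add, mulVec_smul]
  have hev : ∀ᶠ t in 𝓝 (0 : ℝ), p + t • d ∈ polyhedron A c := by
    simp only [polyhedron, Set.mem_ofPred_eq, Pi.le_def, hline, eventually_all]
    intro k
    rcases (hp k).eq_or_lt with htight | hslack
    · simp [← htight, hd k htight.symm]
    · have hcont : Continuous fun t : ℝ => (A *ᵥ p + t • A *ᵥ d) k := by fun_prop
      filter_upwards [continuousAt_const.eventually_lt hcont.continuousAt (by simpa using hslack)]
        with t ht using ht.le
  obtain ⟨ε, hε, hball⟩ := Metric.eventually_nhds_iff.mp hev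
  have hmem : ∀ t, |t| < ε → p + t • d ∈ polyhedron A c := fun t ht =>
    hball (by rwa [Real.dist_0_eq_abs])
  refine ⟨ε / 2, half_pos hε, hmem _ ?_, ?_⟩
  · rw [abs_of_pos (half_pos hε)]; linarith
  · rw [sub_eq_add_neg, ← neg_smul]
    exact hmem _ (by rw [abs_neg, abs_of_pos (half_pos hε)]; linarith)

theorem eq_zero_of_mem_extremePoints_polyhedron [Finite ι]
    (hp : p ∈ (polyhedron A c).extremePoints ℝ)
    (hd : ∀ k, (A *ᵥ p) k = c k → (A *ᵥ d) k = 0) : d = 0 := by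
  obtain ⟨ε, hε, hplus, hminus⟩ := exists_add_smul_mem_polyhedron_and_sub_smul_mem hp.1 hd
  have hmid : p ∈ openSegment ℝ (p + ε • d) (p - ε • d) :=
    ⟨1 / 2, 1 / 2, by norm_num, by norm_num, by norm_num, by module⟩
  have hεd : ε • d = 0 := by simpa using hp.2 hplus hminus hmid
  exact (smul_eq_zero.mp hεd).resolve_left hε.ne'

theorem exists_isUnit_det_tight_submatrix [Finite ι] [DecidableEq σ]
    (hp : p ∈ (polyhedron A c).extremePoints ℝ) :
    ∃ e : σ → ι, IsUnit (A.submatrix e id).det ∧ ∀ j, (A *ᵥ p) (e j) = c (e j) := by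
  let tight := {k // (A *ᵥ p) k = c k}
  have hinj : Function.Injective (A.submatrix (Subtype.val : tight → ι) id).mulVec := by
    change Function.Injective (A.submatrix _ id).mulVecLin
    rw [← LinearMap.ker_eq_bot, ker_mulVecLin_eq_bot_iff]
    intro d hd
    refine eq_zero_of_mem_extremePoints_polyhedron hp fun k hk => ?_
    exact congrFun hd ⟨k, hk⟩
  obtain ⟨e, he⟩ := exists_isUnit_det_submatrix_of_injective_mulVec _ hinj
  exact ⟨Subtype.val ∘ e, he, fun j => (e j).2⟩

end Polyhedron

theorem exists_int_div_of_mem_extremePoints_polyhedron {ι σ : Type*} [Finite ι] [Fintype σ]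
    {A : Matrix ι σ ℤ} {c : ι → ℤ} {S : ℤ} (hA : ∀ k j, |A k j| ≤ S) {p : σ → ℝ}
    (hp : p ∈ (polyhedron (A.map Int.cast) fun k => (c k : ℝ)).extremePoints ℝ) (j : σ) :
    ∃ a b : ℤ, 1 ≤ b ∧ b ≤ (Fintype.card σ).factorial * S ^ Fintype.card σ ∧ p j = a / b := by
  classical
  obtain ⟨e, hunit, htight⟩ := exists_isUnit_det_tight_submatrix hp
  have hdet : (A.submatrix e id).det ≠ 0 := fun h =>
    hunit.ne_zero (by rw [submatrix_map, ← Int.cast_det, h, Int.cast_zero])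
  have hbound : |(A.submatrix e id).det| ≤ (Fintype.card σ).factorial * S ^ Fintype.card σ := by
    have := det_le (A := A.submatrix e id) (abv := AbsoluteValue.abs) fun i j => hA (e i) j
    rwa [nsmul_eq_mul] at this
  exact exists_int_div_of_abs_den_le hdet hbound
    (eq_intCast_adjugate_mulVec_div_det hdet (b := c ∘ e) (funext htight) j)

section Market

variable {β σ : Type*} [Fintype σ] (s : σ → ℕ) (v : β → (σ → ℕ) → ℤ)

def surplus (p : σ → ℝ) (i : β) (z : σ → ℕ) : ℝ := v i z - ∑ j, p j * z j

/-- The prices at which every buyer `i` demands the bundle `x i` among the bundles `z ≤ s`. -/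
def supportingPrices (x : β → σ → ℕ) : Set (σ → ℝ) :=
  {p | ∀ i, ∀ z ≤ s, surplus v p i z ≤ surplus v p i (x i)}

theorem supportingPrices_eq_polyhedron (x : β → σ → ℕ) :
    supportingPrices s v x =
      polyhedron ((Matrix.of fun (k : β × Set.Iic s) j => (k.2.1 j - x k.1 j : ℤ)).map Int.cast)
        fun k => ((v k.1 k.2 - v k.1 (x k.1) : ℤ) : ℝ) := by
  ext p
  simp only [supportingPrices, polyhedron, surplus, Set.mem_ofPred_eq, Pi.le_def, mulVec,
    dotProduct, map_apply, of_apply, Prod.forall, Subtype.forall, Set.mem_Iic]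
  refine forall_congr' fun i => forall₂_congr fun z _ => ?_
  push_cast
  simp only [sub_mul, sum_sub_distrib, mul_comm (p _)]
  constructor <;> intro h <;> linarith

variable [Fintype β]

def IsAllocation (x : β → σ → ℕ) : Prop := (∀ i j, x i j ≤ s j) ∧ ∀ j, ∑ i, x i j = s j

def walrasianPrices : Set (σ → ℝ) := {p | ∃ x, IsAllocation s x ∧ p ∈ supportingPrices s v x}

variable {s v} {x y : β → σ → ℕ} {p : σ → ℝ}

theorem sum_surplus_of_isAllocation (hx : IsAllocation s x) :
    ∑ i, surplus v p i (x i) = ∑ i, (v i (x i) : ℝ) - ∑ j, p j * s j := by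
  simp only [surplus, sum_sub_distrib]
  rw [sum_comm]
  congr 1
  exact sum_congr rfl fun j _ => by rw [← mul_sum, ← Nat.cast_sum, hx.2 j]

theorem supportingPrices_subset (hx : IsAllocation s x) (hy : IsAllocation s y)
    (hp : p ∈ supportingPrices s v x) : supportingPrices s v y ⊆ supportingPrices s v x := by
  intro q hq
  -- `x` maximises total value, so the total surplus at `q` is the same for `x` and `y`.
  have hle : ∀ i, surplus v q i (x i) ≤ surplus v q i (y i) := fun i => hq i (x i) (hx.1 i)
  have hwelfare : ∑ i, (v i (y i) : ℝ) ≤ ∑ i, (v i (x i) : ℝ) := by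
    have := sum_le_sum fun i (_ : i ∈ univ) => hp i (y i) (hy.1 i)
    rw [sum_surplus_of_isAllocation hy, sum_surplus_of_isAllocation hx] at this
    linarith
  have hsum : ∑ i, surplus v q i (x i) = ∑ i, surplus v q i (y i) := by
    refine le_antisymm (sum_le_sum fun i _ => hle i) ?_
    rw [sum_surplus_of_isAllocation hx, sum_surplus_of_isAllocation hy]
    linarith
  have heq := (sum_eq_sum_iff_of_le fun i _ => hle i).mp hsum
  exact fun i z hz => (hq i z hz).trans_eq (heq i (mem_univ i)).symm

theorem walrasianPrices_eq_supportingPrices (hx : IsAllocation s x)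
    (hp : p ∈ supportingPrices s v x) : walrasianPrices s v = supportingPrices s v x :=
  Set.Subset.antisymm (fun _ ⟨_, hy, hq⟩ => supportingPrices_subset hx hy hp hq)
    fun _ hq => ⟨x, hx, hq⟩

theorem convex_walrasianPrices : Convex ℝ (walrasianPrices s v) := by
  rintro p ⟨x, hx, hpx⟩
  rw [walrasianPrices_eq_supportingPrices hx hpx]
  rw [supportingPrices_eq_polyhedron] at hpx ⊢
  exact convex_polyhedron hpx

theorem exists_int_div_of_mem_extremePoints_walrasianPrices {S : ℕ} (hS : ∀ j, s j ≤ S)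
    (hp : p ∈ (walrasianPrices s v).extremePoints ℝ) (j : σ) :
    ∃ a b : ℤ, 1 ≤ b ∧ b ≤ (Fintype.card σ).factorial * (S : ℤ) ^ Fintype.card σ ∧
      p j = a / b := by
  classical
  obtain ⟨x, hx, hpx⟩ := hp.1
  rw [walrasianPrices_eq_supportingPrices hx hpx, supportingPrices_eq_polyhedron] at hp
  refine exists_int_div_of_mem_extremePoints_polyhedron (fun k j => ?_) hp j
  exact abs_sub_le_of_nonneg_of_le (by positivity) (by exact_mod_cast (k.2.2 j).trans (hS j))
    (by positivity) (by exact_mod_cast (hx.1 k.1 j).trans (hS j))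

end Market

/-- The set of Walrasian prices is a (convex) polytope whose vertices (extreme points)
have rational coordinates `p j = a j / b j` with integers `a j, b j` satisfying
`1 ≤ b j ≤ n! · S^n ≤ (S·n)^n`, where `S` bounds the supplies. -/
theorem walrasian_prices_vertices_rational
    (m n : ℕ) (s : Fin n → ℕ) (S : ℕ) (hS : ∀ j, s j ≤ S)
    (v : Fin m → (Fin n → ℕ) → ℤ) :
    let W : Set (Fin n → ℝ) := {p | ∃ x : Fin m → Fin n → ℕ,
      (∀ i j, x i j ≤ s j) ∧ (∀ j, ∑ i, x i j = s j) ∧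
      ∀ i, ∀ z : Fin n → ℕ, (∀ j, z j ≤ s j) →
        (v i z : ℝ) - ∑ j, p j * (z j : ℝ) ≤ (v i (x i) : ℝ) - ∑ j, p j * (x i j : ℝ)}
    Convex ℝ W ∧
    n.factorial * S ^ n ≤ (S * n) ^ n ∧
    ∀ p ∈ W.extremePoints ℝ, ∀ j, ∃ a b : ℤ,
      1 ≤ b ∧ b ≤ (n.factorial : ℤ) * (S : ℤ) ^ n ∧ p j = (a : ℝ) / (b : ℝ) := by
  intro W
  have hW : W = walrasianPrices s v := by
    ext p
    exact ⟨fun ⟨x, h₁, h₂, h₃⟩ => ⟨x, ⟨h₁, h₂⟩, h₃⟩, fun ⟨x, ⟨h₁, h₂⟩, h₃⟩ => ⟨x, h₁, h₂, h₃⟩⟩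
  rw [hW]
  refine ⟨convex_walrasianPrices, ?_, fun p hp j => ?_⟩
  · rw [mul_pow, mul_comm n.factorial]
    exact Nat.mul_le_mul_left _ (Nat.factorial_le_pow n)
  · simpa using exists_int_div_of_mem_extremePoints_walrasianPrices hS hp j
end

section
/- Isolation-style lemma of Klivans–Spielman: let C ⊆ ℝ^n be a finite set of points whose coordinates take at most K distinct values in total. If r ∈ {0,1,...,⌈Kn/ε⌉}^n is chosen with each coordinate independent and uniform, then with probability at least 1 - ε there is a unique point p ∈ C minimizing r·p. -/
open scoped Classical

open Finset

/-- Exchange lemma: raising only the `j`-th coefficient can only decrease the `j`-th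
coordinate of minimizers. -/
lemma ks_exchange {n : ℕ} (C : Finset (Fin n → ℝ)) (j : Fin n) (r r' : Fin n → ℝ)
    (hoff : ∀ i, i ≠ j → r i = r' i) (hj : r j < r' j)
    {p p' : Fin n → ℝ} (hp : p ∈ C) (hp' : p' ∈ C)
    (hmin : ∀ q ∈ C, ∑ i, r i * p i ≤ ∑ i, r i * q i)
    (hmin' : ∀ q ∈ C, ∑ i, r' i * p' i ≤ ∑ i, r' i * q i) :
    p' j ≤ p j := by
  have h1 := hmin p' hp'
  have h2 := hmin' p hp
  have key : ∀ x : Fin n → ℝ,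
      ∑ i, r' i * x i - ∑ i, r i * x i = (r' j - r j) * x j := by
    intro x
    rw [← Finset.sum_sub_distrib]
    rw [Finset.sum_eq_single j]
    · ring
    · intro i _ hi
      rw [hoff i hi]; ring
    · intro h; exact absurd (Finset.mem_univ j) h
  have hkey : (r' j - r j) * p' j ≤ (r' j - r j) * p j := by
    have := key p; have := key p'; linarith
  nlinarith [hkey, sub_pos.mpr hj]

/-- Per-fiber bound: the number of values `t` of the `j`-th coefficient for which the
minimum is attained by two points differing in coordinate `j` is at most `K`. -/
lemma ks_fiber {n N K : ℕ} (C : Finset (Fin n → ℝ)) (j : Fin n)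
    (hK : (C.image fun p => p j).card ≤ K) (hC : C.Nonempty)
    (ρ : Fin (N+1) → Fin n → ℝ)
    (hoff : ∀ t t' i, i ≠ j → ρ t i = ρ t' i)
    (hmono : ∀ t t' : Fin (N+1), t < t' → ρ t j < ρ t' j) :
    (univ.filter fun t : Fin (N+1) => ∃ p ∈ C, ∃ q ∈ C,
       (∀ s ∈ C, ∑ i, ρ t i * p i ≤ ∑ i, ρ t i * s i) ∧
       (∀ s ∈ C, ∑ i, ρ t i * q i ≤ ∑ i, ρ t i * s i) ∧ p j ≠ q j).card ≤ K := by
  classical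
  set M : Fin (N+1) → Finset (Fin n → ℝ) :=
    fun t => C.filter fun p => ∀ s ∈ C, ∑ i, ρ t i * p i ≤ ∑ i, ρ t i * s i with hM
  have hMne : ∀ t, ((M t).image fun p => p j).Nonempty := by
    intro t
    obtain ⟨p, hp, hmin⟩ := C.exists_min_image (fun p => ∑ i, ρ t i * p i) hC
    exact ⟨p j, mem_image_of_mem _ (mem_filter.2 ⟨hp, hmin⟩)⟩
  set φ : Fin (N+1) → ℝ := fun t => ((M t).image fun p => p j).max' (hMne t) with hφ
  set B := univ.filter fun t : Fin (N+1) => ∃ p ∈ C, ∃ q ∈ C,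
       (∀ s ∈ C, ∑ i, ρ t i * p i ≤ ∑ i, ρ t i * s i) ∧
       (∀ s ∈ C, ∑ i, ρ t i * q i ≤ ∑ i, ρ t i * s i) ∧ p j ≠ q j with hB
  have hanti : ∀ t ∈ B, ∀ t' ∈ B, t < t' → φ t' < φ t := by
    intro t ht t' _ htt'
    obtain ⟨p, hp, q, hq, hpm, hqm, hne⟩ := (mem_filter.1 ht).2
    obtain ⟨p', hp'M, hp'j⟩ := mem_image.1 (((M t').image fun p => p j).max'_mem (hMne t'))
    obtain ⟨hp'C, hmin'⟩ := mem_filter.1 hp'M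
    have h1 : p' j ≤ p j :=
      ks_exchange C j (ρ t) (ρ t') (fun i hi => hoff t t' i hi) (hmono t t' htt')
        hp hp'C hpm hmin'
    have h2 : p' j ≤ q j :=
      ks_exchange C j (ρ t) (ρ t') (fun i hi => hoff t t' i hi) (hmono t t' htt')
        hq hp'C hqm hmin'
    have hpj : p j ≤ φ t :=
      ((M t).image fun p => p j).le_max' (p j)
        (mem_image_of_mem _ (mem_filter.2 ⟨hp, hpm⟩))
    have hqj : q j ≤ φ t :=
      ((M t).image fun p => p j).le_max' (q j)
        (mem_image_of_mem _ (mem_filter.2 ⟨hq, hqm⟩))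
    have : φ t' = p' j := hp'j.symm
    rcases lt_or_gt_of_ne hne with h | h
    · linarith
    · linarith
  have hinj : Set.InjOn φ ↑B := by
    intro t ht t' ht' heq
    by_contra hne
    rcases lt_or_gt_of_ne hne with h | h
    · exact absurd heq (ne_of_gt (hanti t ht t' ht' h))
    · exact absurd heq (ne_of_lt (hanti t' ht' t ht h))
  have hmaps : ∀ t ∈ B, φ t ∈ C.image fun p => p j := by
    intro t _
    have := ((M t).image fun p => p j).max'_mem (hMne t)
    exact (image_subset_image (filter_subset _ _)) this
  calc B.card ≤ (C.image fun p => p j).card := card_le_card_of_injOn φ hmaps hinj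
    _ ≤ K := hK

/-- **Klivans–Spielman isolation lemma.** Let `C ⊆ ℝ^n` be a finite set of points whose
coordinates take at most `K` distinct values in total. If `r` is chosen uniformly at
random from `{0, 1, ..., ⌈Kn/ε⌉}^n` (coordinates independent), then with probability at
least `1 - ε` there is a unique point `p ∈ C` minimizing `r · p`. -/
theorem klivans_spielman_isolation
    (n K : ℕ) (C : Finset (Fin n → ℝ)) (hC : C.Nonempty)
    (hK : (Finset.univ.biUnion fun j : Fin n => C.image fun p => p j).card ≤ K)
    (ε : ℝ) (hε : 0 < ε) (hε1 : ε < 1) :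
    (1 - ε) * (Fintype.card (Fin n → Fin (⌈(K * n : ℝ) / ε⌉₊ + 1)) : ℝ) ≤
      ((Finset.univ.filter fun r : Fin n → Fin (⌈(K * n : ℝ) / ε⌉₊ + 1) =>
        ∃! p, p ∈ C ∧ ∀ q ∈ C,
          ∑ j, ((r j : ℕ) : ℝ) * p j ≤ ∑ j, ((r j : ℕ) : ℝ) * q j).card : ℝ) := by
  classical
  set N := ⌈(K * n : ℝ) / ε⌉₊ with hNdef
  set Sing : Fin n → Finset (Fin n → Fin (N + 1)) := fun j =>
    univ.filter fun r => ∃ p ∈ C, ∃ q ∈ C,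
      (∀ s ∈ C, ∑ i, ((r i : ℕ) : ℝ) * p i ≤ ∑ i, ((r i : ℕ) : ℝ) * s i) ∧
      (∀ s ∈ C, ∑ i, ((r i : ℕ) : ℝ) * q i ≤ ∑ i, ((r i : ℕ) : ℝ) * s i) ∧ p j ≠ q j
    with hSingdef
  -- every "bad" r lies in some Sing j
  have hsub : (univ.filter fun r : Fin n → Fin (N + 1) =>
      ¬ ∃! p, p ∈ C ∧ ∀ q ∈ C,
        ∑ j, ((r j : ℕ) : ℝ) * p j ≤ ∑ j, ((r j : ℕ) : ℝ) * q j) ⊆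
      univ.biUnion Sing := by
    intro r hr
    rw [mem_filter] at hr
    obtain ⟨-, hr⟩ := hr
    obtain ⟨p, hp, hmin⟩ := C.exists_min_image (fun p => ∑ i, ((r i : ℕ) : ℝ) * p i) hC
    have h2 : ∃ q, (q ∈ C ∧ ∀ s ∈ C,
        ∑ i, ((r i : ℕ) : ℝ) * q i ≤ ∑ i, ((r i : ℕ) : ℝ) * s i) ∧ q ≠ p := by
      by_contra hq
      push_neg at hq
      exact hr ⟨p, ⟨hp, hmin⟩, fun y hy => hq y hy⟩
    obtain ⟨q, ⟨hq, hqmin⟩, hqp⟩ := h2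
    obtain ⟨j, hj⟩ := Function.ne_iff.1 hqp
    exact mem_biUnion.2 ⟨j, mem_univ j,
      mem_filter.2 ⟨mem_univ r, q, hq, p, hp, hqmin, hmin, hj⟩⟩
  -- each Sing j is small
  have hSing : ∀ j : Fin n, (Sing j).card ≤ (N + 1) ^ (n - 1) * K := by
    intro j
    set e := Equiv.funSplitAt j (Fin (N + 1)) with he
    have hKj : (C.image fun p => p j).card ≤ K :=
      le_trans (card_le_card (Finset.subset_biUnion_of_mem (s := univ) (fun j => C.image fun p => p j) (mem_univ j))) hK
    have hfib : ∀ b : { i : Fin n // i ≠ j } → Fin (N + 1),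
        (univ.filter fun t : Fin (N + 1) => e.symm (t, b) ∈ Sing j).card ≤ K := by
      intro b
      have hoff : ∀ t t' : Fin (N + 1), ∀ i, i ≠ j →
          ((((e.symm (t, b)) i : ℕ) : ℝ)) = (((e.symm (t', b)) i : ℕ) : ℝ) := by
        intro t t' i hi
        simp [he, Equiv.funSplitAt_symm_apply, dif_neg hi]
      have hmono : ∀ t t' : Fin (N + 1), t < t' →
          ((((e.symm (t, b)) j : ℕ) : ℝ)) < (((e.symm (t', b)) j : ℕ) : ℝ) := by
        intro t t' h
        simp only [he, Equiv.funSplitAt_symm_apply, dif_pos rfl]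
        exact_mod_cast h
      have := ks_fiber C j hKj hC (fun t i => (((e.symm (t, b)) i : ℕ) : ℝ)) hoff hmono
      refine le_trans (le_of_eq ?_) this
      congr 1
      ext t
      simp only [hSingdef, mem_filter, mem_univ, true_and]
    have hcover : Sing j ⊆ univ.biUnion fun b : { i : Fin n // i ≠ j } → Fin (N + 1) =>
        (univ.filter fun t : Fin (N + 1) => e.symm (t, b) ∈ Sing j).image
          fun t => e.symm (t, b) := by
      intro r hr
      refine mem_biUnion.2 ⟨(e r).2, mem_univ _,
        mem_image.2 ⟨(e r).1, mem_filter.2 ⟨mem_univ _, ?_⟩, ?_⟩⟩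
      · rw [Prod.mk.eta, e.symm_apply_apply]; exact hr
      · rw [Prod.mk.eta, e.symm_apply_apply]
    have hcardB : Fintype.card ({ i : Fin n // i ≠ j } → Fin (N + 1)) = (N + 1) ^ (n - 1) := by
      rw [Fintype.card_fun, Fintype.card_fin]
      congr 1
      simp [Fintype.card_subtype_compl]
    calc (Sing j).card
        ≤ (univ.biUnion fun b : { i : Fin n // i ≠ j } → Fin (N + 1) =>
            (univ.filter fun t : Fin (N + 1) => e.symm (t, b) ∈ Sing j).image
              fun t => e.symm (t, b)).card := card_le_card hcover
      _ ≤ ∑ b : { i : Fin n // i ≠ j } → Fin (N + 1),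
            ((univ.filter fun t : Fin (N + 1) => e.symm (t, b) ∈ Sing j).image
              fun t => e.symm (t, b)).card := card_biUnion_le
      _ ≤ ∑ _b : { i : Fin n // i ≠ j } → Fin (N + 1), K :=
            sum_le_sum fun b _ => le_trans card_image_le (hfib b)
      _ = (N + 1) ^ (n - 1) * K := by
            rw [sum_const, smul_eq_mul, card_univ, hcardB]
  -- bad count
  have hbadnat : (univ.filter fun r : Fin n → Fin (N + 1) =>
      ¬ ∃! p, p ∈ C ∧ ∀ q ∈ C,
        ∑ j, ((r j : ℕ) : ℝ) * p j ≤ ∑ j, ((r j : ℕ) : ℝ) * q j).card ≤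
      n * ((N + 1) ^ (n - 1) * K) := by
    calc _ ≤ (univ.biUnion Sing).card := card_le_card hsub
      _ ≤ ∑ j : Fin n, (Sing j).card := card_biUnion_le
      _ ≤ ∑ _j : Fin n, (N + 1) ^ (n - 1) * K := sum_le_sum fun j _ => hSing j
      _ = n * ((N + 1) ^ (n - 1) * K) := by
            rw [sum_const, smul_eq_mul, card_univ, Fintype.card_fin]
  have hT : (Fintype.card (Fin n → Fin (N + 1)) : ℝ) = ((N : ℝ) + 1) ^ n := by
    rw [Fintype.card_fun, Fintype.card_fin, Fintype.card_fin]
    push_cast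
    ring
  have harith : ((n : ℝ)) * (((N : ℝ) + 1) ^ (n - 1) * (K : ℝ)) ≤ ε * ((N : ℝ) + 1) ^ n := by
    rcases Nat.eq_zero_or_pos n with h0 | hpos
    · subst h0; simp; positivity
    · have hn1 : n - 1 + 1 = n := Nat.succ_pred_eq_of_pos hpos
      have hceil : (K * n : ℝ) / ε ≤ (N : ℝ) := Nat.le_ceil _
      have hKn : (K : ℝ) * n ≤ ε * ((N : ℝ) + 1) := by
        rw [div_le_iff₀ hε] at hceil
        nlinarith
      calc ((n : ℝ)) * (((N : ℝ) + 1) ^ (n - 1) * (K : ℝ))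
          = ((K : ℝ) * n) * ((N : ℝ) + 1) ^ (n - 1) := by ring
        _ ≤ (ε * ((N : ℝ) + 1)) * ((N : ℝ) + 1) ^ (n - 1) :=
            mul_le_mul_of_nonneg_right hKn (by positivity)
        _ = ε * ((N : ℝ) + 1) ^ (n - 1 + 1) := by ring
        _ = ε * ((N : ℝ) + 1) ^ n := by rw [hn1]
  have hbad : ((univ.filter fun r : Fin n → Fin (N + 1) =>
      ¬ ∃! p, p ∈ C ∧ ∀ q ∈ C,
        ∑ j, ((r j : ℕ) : ℝ) * p j ≤ ∑ j, ((r j : ℕ) : ℝ) * q j).card : ℝ) ≤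
      ε * (Fintype.card (Fin n → Fin (N + 1)) : ℝ) := by
    rw [hT]
    refine le_trans ?_ harith
    exact_mod_cast hbadnat
  have hsplit := Finset.card_filter_add_card_filter_not
    (s := (univ : Finset (Fin n → Fin (N + 1))))
    (p := fun r : Fin n → Fin (N + 1) =>
      ∃! p, p ∈ C ∧ ∀ q ∈ C,
        ∑ j, ((r j : ℕ) : ℝ) * p j ≤ ∑ j, ((r j : ℕ) : ℝ) * q j)
  rw [card_univ] at hsplit
  have hsplit' : ((univ.filter fun r : Fin n → Fin (N + 1) =>
        ∃! p, p ∈ C ∧ ∀ q ∈ C,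
          ∑ j, ((r j : ℕ) : ℝ) * p j ≤ ∑ j, ((r j : ℕ) : ℝ) * q j).card : ℝ) +
      ((univ.filter fun r : Fin n → Fin (N + 1) =>
        ¬ ∃! p, p ∈ C ∧ ∀ q ∈ C,
          ∑ j, ((r j : ℕ) : ℝ) * p j ≤ ∑ j, ((r j : ℕ) : ℝ) * q j).card : ℝ) =
      (Fintype.card (Fin n → Fin (N + 1)) : ℝ) := by
    rw [← Nat.cast_add, hsplit]
  have hTpos : (0 : ℝ) ≤ (Fintype.card (Fin n → Fin (N + 1)) : ℝ) := Nat.cast_nonneg _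
  nlinarith [hTpos, hbad, hsplit']
end

section
/- For every price vector p there exist γ ∈ ℝ and sets S_1*,...,S_m* with ∑_i |S_i*| = n such that (1) (S_1*,...,S_m*) maximizes ∑_i (v_i(S_i) - p(S_i)) over all tuples with ∑_i |S_i| = n, (2) S_i* ∈ D(v_i, p + γ·1_{[n]}) for all i, and (3) max_{∑|S_i|=n} ∑_i (v_i(S_i) - p(S_i)) = ∑_i max_S (v_i(S) - p(S) - γ|S|) + γn. -/
open Finset



/-- From the exchange property of a demand family: shrink a demanded set by one. -/
private lemma gs_shrink {n : ℕ} (fam : Finset (Fin n) → Prop)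
    (hE : ∀ S W X, fam S → fam W → W ∩ X = ∅ →
      ∃ S', fam S' ∧ S' ∩ X = ∅ ∧ S \ X ⊆ S') :
    ∀ (k : ℕ) (A B : Finset (Fin n)), fam A → fam B → (B \ A).card ≤ k →
      A.card < B.card → ∃ C, fam C ∧ C.card + 1 = B.card := by
  intro k
  induction k with
  | zero =>
    intro A B hA hB hcard hlt
    exfalso
    have := Finset.card_le_card_sdiff_add_card (s := B) (t := A)
    omega
  | succ k ih =>
    intro A B hA hB hcard hlt
    by_cases heq : A.card + 1 = B.card
    · exact ⟨A, hA, heq⟩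
    have h2 : A.card + 2 ≤ B.card := by omega
    have hBA : (B \ A).Nonempty := by
      rw [← Finset.card_pos]
      have := Finset.card_le_card_sdiff_add_card (s := B) (t := A)
      omega
    obtain ⟨b, hb⟩ := hBA
    have hbB : b ∈ B := (Finset.mem_sdiff.1 hb).1
    have hbA : b ∉ A := (Finset.mem_sdiff.1 hb).2
    set X : Finset (Fin n) := (A ∪ B)ᶜ ∪ ((B \ A).erase b) with hX
    have hAX : A ∩ X = ∅ := by
      apply Finset.eq_empty_of_forall_notMem
      intro j hj
      rw [Finset.mem_inter, hX, Finset.mem_union, Finset.mem_compl, Finset.mem_erase,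
        Finset.mem_sdiff] at hj
      obtain ⟨hjA, h⟩ := hj
      rcases h with h | h
      · exact h (Finset.mem_union_left _ hjA)
      · exact h.2.2 hjA
    obtain ⟨T, hTfam, hTX, hBXT⟩ := hE B A X hB hA hAX
    have hTnX : ∀ j ∈ T, j ∉ X := by
      intro j hj hjX
      have : j ∈ T ∩ X := Finset.mem_inter.2 ⟨hj, hjX⟩
      simp [hTX] at this
    have hbT : b ∈ T := by
      apply hBXT
      rw [Finset.mem_sdiff]
      refine ⟨hbB, ?_⟩
      rw [hX, Finset.mem_union, Finset.mem_compl]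
      push_neg
      exact ⟨Finset.mem_union_right _ hbB, fun h => absurd rfl (Finset.mem_erase.1 h).1⟩
    have hABT : ∀ j, j ∈ A → j ∈ B → j ∈ T := by
      intro j hjA hjB
      apply hBXT
      rw [Finset.mem_sdiff]
      refine ⟨hjB, ?_⟩
      rw [hX, Finset.mem_union, Finset.mem_compl]
      push_neg
      refine ⟨Finset.mem_union_left _ hjA, fun h => ?_⟩
      exact (Finset.mem_sdiff.1 (Finset.mem_of_mem_erase h)).2 hjA
    have hTsub : T ⊆ insert b A := by
      intro j hj
      have hjX := hTnX j hj
      rw [hX, Finset.mem_union, Finset.mem_compl] at hjX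
      push_neg at hjX
      obtain ⟨h1, h2⟩ := hjX
      rcases Finset.mem_union.1 h1 with h | h
      · exact Finset.mem_insert_of_mem h
      · by_cases hjA : j ∈ A
        · exact Finset.mem_insert_of_mem hjA
        · have : j ∈ B \ A := Finset.mem_sdiff.2 ⟨h, hjA⟩
          have : j = b := by
            by_contra hne
            exact h2 (Finset.mem_erase.2 ⟨hne, this⟩)
          exact this ▸ Finset.mem_insert_self _ _
    have hTcard : T.card < B.card := by
      have := Finset.card_le_card hTsub
      have := Finset.card_insert_le b A
      omega
    have hmeas : (B \ T).card ≤ k := by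
      have hsub : B \ T ⊆ (B \ A).erase b := by
        intro j hj
        rw [Finset.mem_sdiff] at hj
        rw [Finset.mem_erase, Finset.mem_sdiff]
        refine ⟨fun h => hj.2 (h ▸ hbT), hj.1, fun hjA => hj.2 (hABT j hjA hj.1)⟩
      have h1 := Finset.card_le_card hsub
      have h2 : ((B \ A).erase b).card + 1 = (B \ A).card :=
        Finset.card_erase_add_one hb
      omega
    exact ih T B hTfam hB hmeas hTcard

/-- Interval property: any cardinality between two demanded cardinalities is demanded. -/
private lemma gs_interval {n : ℕ} (fam : Finset (Fin n) → Prop)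
    (hE : ∀ S W X, fam S → fam W → W ∩ X = ∅ →
      ∃ S', fam S' ∧ S' ∩ X = ∅ ∧ S \ X ⊆ S') :
    ∀ (d : ℕ) (A B : Finset (Fin n)) (j : ℕ), fam A → fam B → A.card ≤ j →
      j ≤ B.card → B.card ≤ j + d → ∃ C, fam C ∧ C.card = j := by
  intro d
  induction d with
  | zero =>
    intro A B j hA hB h1 h2 h3
    exact ⟨B, hB, by omega⟩
  | succ d ih =>
    intro A B j hA hB h1 h2 h3
    by_cases hBj : B.card = j
    · exact ⟨B, hB, hBj⟩
    have hlt : A.card < B.card := by omega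
    obtain ⟨C, hC, hCcard⟩ := gs_shrink fam hE (B \ A).card A B hA hB le_rfl hlt
    exact ih A C j hA hC h1 (by omega) (by omega)


private lemma gs_select {m n : ℕ} (Dem : Fin m → Finset (Fin n) → Prop)
    (hint : ∀ (i : Fin m) (j : ℕ) (A B : Finset (Fin n)), Dem i A → Dem i B →
      A.card ≤ j → j ≤ B.card → ∃ C, Dem i C ∧ C.card = j) :
    ∀ (d : ℕ) (x y : Fin m → Finset (Fin n)), (∀ i, Dem i (x i)) → (∀ i, Dem i (y i)) →
      ∑ i, (x i).card ≤ n → n ≤ ∑ i, (y i).card → n ≤ ∑ i, (x i).card + d →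
      ∃ S : Fin m → Finset (Fin n), (∀ i, Dem i (S i)) ∧ ∑ i, (S i).card = n := by
  intro d
  induction d with
  | zero =>
    intro x y hx hy h1 h2 h3
    exact ⟨x, hx, by omega⟩
  | succ d ih =>
    intro x y hx hy h1 h2 h3
    by_cases hxe : ∑ i, (x i).card = n
    · exact ⟨x, hx, hxe⟩
    have hlt : ∑ i, (x i).card < n := by omega
    have hex : ∃ i, (x i).card < (y i).card := by
      by_contra h
      push_neg at h
      have : ∑ i, (y i).card ≤ ∑ i, (x i).card := Finset.sum_le_sum (fun i _ => h i)
      omega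
    obtain ⟨i, hi⟩ := hex
    obtain ⟨C, hC, hCcard⟩ := hint i ((x i).card + 1) (x i) (y i) (hx i) (hy i)
      (Nat.le_succ _) hi
    refine ih (Function.update x i C) y ?_ hy ?_ h2 ?_
    · intro i'
      by_cases h : i' = i
      · subst h; simpa using hC
      · simpa [Function.update_of_ne h] using hx i'
    all_goals {
      have hfun : (fun j => ((Function.update x i C j).card)) =
          Function.update (fun j => (x j).card) i C.card := by
        funext j
        by_cases h : j = i
        · subst h; simp
        · simp [Function.update_of_ne h]
      have hs : ∑ j, (Function.update x i C j).card = ∑ j, Function.update (fun j => (x j).card) i C.card j := by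
        rw [← hfun]
      rw [hs, Finset.sum_update_of_mem (Finset.mem_univ i)]
      have := Finset.sum_eq_sum_sdiff_singleton_add (Finset.mem_univ i) (fun j => (x j).card)
      omega
    }

private def gsDem {n : ℕ} (w : Finset (Fin n) → ℤ) (q : Fin n → ℝ) (S : Finset (Fin n)) : Prop :=
  ∀ T, (w T : ℝ) - ∑ j ∈ T, q j ≤ (w S : ℝ) - ∑ j ∈ S, q j


/-- **AllGreedy lemma.** For gross substitute valuations and every price vector `p`,
there exist `γ ∈ ℝ` and sets `S₁*, ..., S_m*` with `∑ᵢ |Sᵢ*| = n` such that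
(1) `(Sᵢ*)` maximizes `∑ᵢ (vᵢ(Sᵢ) - p(Sᵢ))` over all tuples with `∑ᵢ |Sᵢ| = n`,
(2) `Sᵢ* ∈ D(vᵢ, p + γ·1)` for all `i`, and
(3) `max_{∑|Sᵢ|=n} ∑ᵢ (vᵢ(Sᵢ) - p(Sᵢ)) = ∑ᵢ max_S (vᵢ(S) - p(S) - γ|S|) + γ·n`. -/
theorem allgreedy_lemma
    (m n : ℕ) (hm : 0 < m)
    (v : Fin m → Finset (Fin n) → ℤ)
    (hGS : ∀ (i : Fin m) (p p' : Fin n → ℝ), (∀ j, p j ≤ p' j) →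
      ∀ S : Finset (Fin n),
        (∀ T, (v i T : ℝ) - ∑ j ∈ T, p j ≤ (v i S : ℝ) - ∑ j ∈ S, p j) →
        ∃ S', (∀ T, (v i T : ℝ) - ∑ j ∈ T, p' j ≤ (v i S' : ℝ) - ∑ j ∈ S', p' j) ∧
          ∀ j ∈ S, p j = p' j → j ∈ S')
    (p : Fin n → ℝ) :
    ∃ (γ : ℝ) (S : Fin m → Finset (Fin n)),
      (∑ i, (S i).card = n) ∧
      (∀ T : Fin m → Finset (Fin n), (∑ i, (T i).card = n) →
        ∑ i, ((v i (T i) : ℝ) - ∑ j ∈ T i, p j) ≤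
          ∑ i, ((v i (S i) : ℝ) - ∑ j ∈ S i, p j)) ∧
      (∀ i, ∀ T : Finset (Fin n),
        (v i T : ℝ) - ∑ j ∈ T, (p j + γ) ≤ (v i (S i) : ℝ) - ∑ j ∈ S i, (p j + γ)) ∧
      (∑ i, ((v i (S i) : ℝ) - ∑ j ∈ S i, p j) =
        (∑ i, sSup {y : ℝ | ∃ T : Finset (Fin n),
          y = (v i T : ℝ) - (∑ j ∈ T, p j) - γ * (T.card : ℝ)}) + γ * (n : ℝ)) := by
  classical
  rcases Nat.eq_zero_or_pos n with hn | hn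
  · subst hn
    have hT0 : ∀ T : Finset (Fin 0), T = ∅ :=
      fun T => Finset.eq_empty_of_forall_notMem (fun x _ => x.elim0)
    refine ⟨0, fun _ => ∅, by simp, ?_, ?_, ?_⟩
    · intro T _
      have : ∀ i, T i = ∅ := fun i => hT0 (T i)
      simp [this]
    · intro i T
      rw [hT0 T]
    · have hset : ∀ i : Fin m, {y : ℝ | ∃ T : Finset (Fin 0),
          y = (v i T : ℝ) - (∑ j ∈ T, p j) - 0 * (T.card : ℝ)} = {((v i ∅ : ℤ) : ℝ)} := by
        intro i
        ext y
        simp only [Set.mem_setOf_eq, Set.mem_singleton_iff]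
        constructor
        · rintro ⟨T, rfl⟩
          rw [hT0 T]
          simp
        · rintro rfl
          exact ⟨∅, by simp⟩
      simp only [hset, csSup_singleton]
      simp
  classical
  haveI : Nonempty (Fin m) := ⟨⟨0, hm⟩⟩
  have hsplit : ∀ (γ : ℝ) (T : Finset (Fin n)),
      ∑ j ∈ T, (p j + γ) = ∑ j ∈ T, p j + (T.card : ℝ) * γ := by
    intro γ T
    rw [Finset.sum_add_distrib, Finset.sum_const, nsmul_eq_mul]
  -- nonemptiness of demand
  have hne : ∀ (i : Fin m) (γ : ℝ), ∃ S, gsDem (v i) (fun j => p j + γ) S := by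
    intro i γ
    obtain ⟨S, hS⟩ := Finite.exists_max (fun T : Finset (Fin n) => (v i T : ℝ) - ∑ j ∈ T, (p j + γ))
    exact ⟨S, hS⟩
  -- exchange property
  have hE : ∀ (i : Fin m) (γ : ℝ) (S W X : Finset (Fin n)),
      gsDem (v i) (fun j => p j + γ) S → gsDem (v i) (fun j => p j + γ) W → W ∩ X = ∅ →
      ∃ S', gsDem (v i) (fun j => p j + γ) S' ∧ S' ∩ X = ∅ ∧ S \ X ⊆ S' := by
    intro i γ S W X hS hW hWX
    have hle : ∀ j, (fun j => p j + γ) j ≤ (fun j => p j + γ + if j ∈ X then 1 else 0) j := by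
      intro j; dsimp only; split <;> linarith
    obtain ⟨S', hS'max, hkeep⟩ := hGS i _ _ hle S hS
    have hnotin : ∀ (U : Finset (Fin n)), U ∩ X = ∅ → ∀ j ∈ U, j ∉ X := by
      intro U hU j hj hjX
      have : j ∈ U ∩ X := Finset.mem_inter.2 ⟨hj, hjX⟩
      simp [hU] at this
    have hsumW : ∑ j ∈ W, (p j + γ + if j ∈ X then (1:ℝ) else 0) = ∑ j ∈ W, (p j + γ) := by
      apply Finset.sum_congr rfl
      intro j hj
      simp [hnotin W hWX j hj]
    have hsumS' : ∑ j ∈ S', (p j + γ + if j ∈ X then (1:ℝ) else 0)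
        = ∑ j ∈ S', (p j + γ) + ((S' ∩ X).card : ℝ) := by
      rw [Finset.sum_add_distrib, Finset.sum_boole, Finset.filter_mem_eq_inter]
    have h1 := hS'max W
    rw [hsumW, hsumS'] at h1
    have h2 := hW S'
    have hc : ((S' ∩ X).card : ℝ) ≤ 0 := by linarith
    have hc0 : S' ∩ X = ∅ := by
      rw [← Finset.card_eq_zero]
      exact_mod_cast le_antisymm hc (Nat.cast_nonneg _)
    rw [hc0] at h1
    simp only [Finset.card_empty, Nat.cast_zero, add_zero] at h1
    refine ⟨S', ?_, hc0, ?_⟩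
    · intro T
      exact le_trans (hW T) h1
    · intro j hj
      rw [Finset.mem_sdiff] at hj
      exact hkeep j hj.1 (by simp [hj.2])
  -- closedness
  have hclosedgen : ∀ P : (Fin m → Finset (Fin n)) → Prop,
      IsClosed {γ : ℝ | ∃ c : Fin m → Finset (Fin n),
        (∀ i, gsDem (v i) (fun j => p j + γ) (c i)) ∧ P c} := by
    intro P
    have heq : {γ : ℝ | ∃ c : Fin m → Finset (Fin n),
        (∀ i, gsDem (v i) (fun j => p j + γ) (c i)) ∧ P c}
        = ⋃ c : Fin m → Finset (Fin n),
            {γ | (∀ i, gsDem (v i) (fun j => p j + γ) (c i)) ∧ P c} := by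
      ext γ; simp
    rw [heq]
    apply isClosed_iUnion_of_finite
    intro c
    by_cases hP : P c
    · have heq2 : {γ : ℝ | (∀ i, gsDem (v i) (fun j => p j + γ) (c i)) ∧ P c}
          = ⋂ (i : Fin m), ⋂ (T : Finset (Fin n)),
            {γ | (v i T : ℝ) - ∑ j ∈ T, (p j + γ) ≤ (v i (c i) : ℝ) - ∑ j ∈ c i, (p j + γ)} := by
        ext γ
        simp only [Set.mem_setOf_eq, Set.mem_iInter, gsDem, hP, and_true]
      rw [heq2]
      apply isClosed_iInter
      intro i
      apply isClosed_iInter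
      intro T
      apply isClosed_le
      · apply Continuous.sub continuous_const
        exact continuous_finset_sum _ (fun j _ => continuous_const.add continuous_id)
      · apply Continuous.sub continuous_const
        exact continuous_finset_sum _ (fun j _ => continuous_const.add continuous_id)
    · have heq2 : {γ : ℝ | (∀ i, gsDem (v i) (fun j => p j + γ) (c i)) ∧ P c} = ∅ := by
        ext γ; simp [hP]
      rw [heq2]; exact isClosed_empty
  -- bounds
  obtain ⟨x₀, hBmax⟩ := Finite.exists_max
    (fun x : Fin m × Finset (Fin n) => (v x.1 x.2 : ℝ) - ∑ j ∈ x.2, p j)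
  obtain ⟨i₁, hmin1⟩ := Finite.exists_max (fun i : Fin m => -((v i univ : ℝ) - ∑ j, p j))
  obtain ⟨i₂, hmin2⟩ := Finite.exists_max (fun i : Fin m => -(v i ∅ : ℝ))
  set Bd : ℝ := (v x₀.1 x₀.2 : ℝ) - ∑ j ∈ x₀.2, p j with hBd
  set M0 : ℝ := Bd + -((v i₁ univ : ℝ) - ∑ j, p j) with hM0
  set M2 : ℝ := Bd + -(v i₂ ∅ : ℝ) with hM2
  have hgBd : ∀ (i : Fin m) (T : Finset (Fin n)), (v i T : ℝ) - ∑ j ∈ T, p j ≤ Bd :=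
    fun i T => hBmax (i, T)
  -- γ₀ : all-univ demanded
  set γ₀ : ℝ := -(max M0 0 + 1) with hγ₀
  have huniv : ∀ i : Fin m, gsDem (v i) (fun j => p j + γ₀) univ := by
    intro i T
    rw [hsplit, hsplit]
    have hcle : T.card ≤ n := by
      have := Finset.card_le_univ T
      simpa using this
    rcases eq_or_lt_of_le hcle with hTc | hTc
    · have : T = univ := Finset.eq_univ_of_card T (by simpa using hTc)
      subst this
      simp
    · have h1 : (v i T : ℝ) - ∑ j ∈ T, p j ≤ Bd := hgBd i T
      have h2 : -((v i univ : ℝ) - ∑ j, p j) ≤ -((v i₁ univ : ℝ) - ∑ j, p j) := hmin1 i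
      have hcard : ((univ : Finset (Fin n)).card : ℝ) = (n : ℝ) := by simp
      rw [hcard]
      have hTn : (T.card : ℝ) ≤ (n : ℝ) - 1 := by
        have : T.card + 1 ≤ n := hTc
        push_cast
        have := (Nat.cast_le (α := ℝ)).2 this
        push_cast at this
        linarith
      have hmax0 : M0 ≤ max M0 0 := le_max_left _ _
      have hmax1 : (0:ℝ) ≤ max M0 0 := le_max_right _ _
      nlinarith [hTn, hmax0, hmax1, h1, h2]
  -- the sets Γ and Γ'
  set Γ : Set ℝ := {γ : ℝ | ∃ c : Fin m → Finset (Fin n),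
    (∀ i, gsDem (v i) (fun j => p j + γ) (c i)) ∧ n ≤ ∑ i, (c i).card} with hΓ
  set Γ' : Set ℝ := {γ : ℝ | ∃ c : Fin m → Finset (Fin n),
    (∀ i, gsDem (v i) (fun j => p j + γ) (c i)) ∧ ∑ i, (c i).card ≤ n} with hΓ'
  have hΓne : γ₀ ∈ Γ := by
    refine ⟨fun _ => univ, huniv, ?_⟩
    have : ∑ _i : Fin m, (univ : Finset (Fin n)).card = m * n := by
      simp [Finset.card_univ, Finset.sum_const, smul_eq_mul]
    rw [this]
    calc n = 1 * n := (one_mul n).symm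
    _ ≤ m * n := Nat.mul_le_mul_right n hm
  have hΓbdd : BddAbove Γ := by
    refine ⟨max M2 0, ?_⟩
    rintro γ ⟨c, hc, hcn⟩
    have hex : ∃ i, (c i).card ≠ 0 := by
      by_contra h
      push_neg at h
      have : ∑ i, (c i).card = 0 := Finset.sum_eq_zero (fun i _ => h i)
      omega
    obtain ⟨i, hi⟩ := hex
    have h1 := hc i ∅
    rw [hsplit, hsplit] at h1
    simp only [Finset.sum_empty, Finset.card_empty, Nat.cast_zero, zero_mul, add_zero,
      sub_zero] at h1
    have h2 : ((c i).card : ℝ) * γ ≤ M2 := by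
      have := hgBd i (c i)
      have := hmin2 i
      linarith
    have hc1 : (1:ℝ) ≤ ((c i).card : ℝ) := by
      have : 1 ≤ (c i).card := Nat.one_le_iff_ne_zero.2 hi
      exact_mod_cast this
    rcases le_or_gt γ 0 with hγ | hγ
    · exact le_trans hγ (le_max_right _ _)
    · have : γ ≤ ((c i).card : ℝ) * γ := le_mul_of_one_le_left (le_of_lt hγ) hc1
      exact le_trans (le_trans this h2) (le_max_left _ _)
  set γS : ℝ := sSup Γ with hγS
  have hγSΓ : γS ∈ Γ := (hclosedgen _).csSup_mem ⟨γ₀, hΓne⟩ hΓbdd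
  have hcover : ∀ γ : ℝ, γ ∉ Γ → γ ∈ Γ' := by
    intro γ hγ
    have hch : ∀ i : Fin m, ∃ S, gsDem (v i) (fun j => p j + γ) S := fun i => hne i γ
    choose c hc using hch
    rcases le_total (∑ i, (c i).card) n with h | h
    · exact ⟨c, hc, h⟩
    · exact absurd ⟨c, hc, h⟩ hγ
  have hγSΓ' : γS ∈ Γ' := by
    have hIoi : Set.Ioi γS ⊆ Γ' := by
      intro γ hγ
      exact hcover γ (fun h => absurd (le_csSup hΓbdd h) (not_le.2 hγ))
    have h1 : Set.Ici γS ⊆ closure Γ' := by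
      rw [← closure_Ioi]
      exact closure_mono hIoi
    have := h1 Set.self_mem_Ici
    rwa [(hclosedgen _).closure_eq] at this
  -- select a demanded tuple with total cardinality exactly n
  obtain ⟨cp, hcp, hcpn⟩ := hγSΓ
  obtain ⟨cm, hcm, hcmn⟩ := hγSΓ'
  have hint : ∀ (i : Fin m) (j : ℕ) (A B : Finset (Fin n)),
      gsDem (v i) (fun j => p j + γS) A → gsDem (v i) (fun j => p j + γS) B →
      A.card ≤ j → j ≤ B.card → ∃ C, gsDem (v i) (fun j => p j + γS) C ∧ C.card = j := by
    intro i j A B hA hB h1 h2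
    exact gs_interval (gsDem (v i) (fun j => p j + γS)) (hE i γS) B.card A B j hA hB h1 h2
      (by omega)
  obtain ⟨S, hS, hScard⟩ := gs_select (fun i => gsDem (v i) (fun j => p j + γS)) hint n
    cm cp hcm hcp hcmn hcpn (by omega)
  refine ⟨γS, S, hScard, ?_, fun i => hS i, ?_⟩
  · -- maximality over tuples with total cardinality n
    intro T hT
    have key : ∀ i : Fin m, (v i (T i) : ℝ) - ∑ j ∈ T i, p j - ((T i).card : ℝ) * γS ≤
        (v i (S i) : ℝ) - ∑ j ∈ S i, p j - ((S i).card : ℝ) * γS := by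
      intro i
      have := hS i (T i)
      rw [hsplit, hsplit] at this
      linarith
    have hsum := Finset.sum_le_sum (fun i (_ : i ∈ (univ : Finset (Fin m))) => key i)
    have eT : ∑ i, (((T i).card : ℝ) * γS) = (n : ℝ) * γS := by
      rw [← Finset.sum_mul]
      congr 1
      rw [← Nat.cast_sum, hT]
    have eS : ∑ i, (((S i).card : ℝ) * γS) = (n : ℝ) * γS := by
      rw [← Finset.sum_mul]
      congr 1
      rw [← Nat.cast_sum, hScard]
    have e1 : ∑ i, ((v i (T i) : ℝ) - ∑ j ∈ T i, p j - ((T i).card : ℝ) * γS)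
        = ∑ i, ((v i (T i) : ℝ) - ∑ j ∈ T i, p j) - (n : ℝ) * γS := by
      rw [Finset.sum_sub_distrib, eT]
    have e2 : ∑ i, ((v i (S i) : ℝ) - ∑ j ∈ S i, p j - ((S i).card : ℝ) * γS)
        = ∑ i, ((v i (S i) : ℝ) - ∑ j ∈ S i, p j) - (n : ℝ) * γS := by
      rw [Finset.sum_sub_distrib, eS]
    rw [e1, e2] at hsum
    linarith
  · -- the sSup identity
    have hsups : ∀ i : Fin m, sSup {y : ℝ | ∃ T : Finset (Fin n),
        y = (v i T : ℝ) - (∑ j ∈ T, p j) - γS * (T.card : ℝ)}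
        = (v i (S i) : ℝ) - ∑ j ∈ S i, p j - γS * ((S i).card : ℝ) := by
      intro i
      have hub : ∀ y ∈ {y : ℝ | ∃ T : Finset (Fin n),
          y = (v i T : ℝ) - (∑ j ∈ T, p j) - γS * (T.card : ℝ)},
          y ≤ (v i (S i) : ℝ) - ∑ j ∈ S i, p j - γS * ((S i).card : ℝ) := by
        rintro y ⟨T, rfl⟩
        have := hS i T
        rw [hsplit, hsplit] at this
        have c1 := mul_comm γS ((T.card : ℝ))
        have c2 := mul_comm γS (((S i).card : ℝ))
        linarith
      apply le_antisymm
      · exact csSup_le ⟨_, ⟨S i, rfl⟩⟩ hub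
      · exact le_csSup ⟨_, hub⟩ ⟨S i, rfl⟩
    have hrw : ∑ i, sSup {y : ℝ | ∃ T : Finset (Fin n),
        y = (v i T : ℝ) - (∑ j ∈ T, p j) - γS * (T.card : ℝ)}
        = ∑ i, ((v i (S i) : ℝ) - ∑ j ∈ S i, p j - γS * ((S i).card : ℝ)) :=
      Finset.sum_congr rfl (fun i _ => hsups i)
    have eS2 : ∑ i, (γS * (((S i).card : ℝ))) = γS * (n : ℝ) := by
      rw [← Finset.mul_sum]
      congr 1
      rw [← Nat.cast_sum, hScard]
    have e3 : ∑ i, ((v i (S i) : ℝ) - ∑ j ∈ S i, p j - γS * (((S i).card : ℝ)))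
        = ∑ i, ((v i (S i) : ℝ) - ∑ j ∈ S i, p j) - γS * (n : ℝ) := by
      rw [Finset.sum_sub_distrib, eS2]
    rw [hrw, e3]
    ring
end

section
/- Unique Minimum Matching Lemma: let v : 2^{[n]} → ℝ be gross substitutes, S ⊆ [n], A = {a_1,...,a_k} ⊆ S, B = {b_1,...,b_k} ⊆ [n]\S. Form the weighted bipartite graph on A × B with weights w(a_i, b_j) = v(S) - v(S ∪ {b_j} \ {a_i}). If M = {(a_1,b_1),...,(a_k,b_k)} is the unique minimum-weight perfect matching of this graph, then v(S) - v(S ∪ B \ A) = ∑_{j=1}^k (v(S) - v(S ∪ {b_j} \ {a_j})). -/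
/-
By testing the gross substitutes property against price vectors that force all but three or four
items in or out of demand, `v` satisfies the local exchange inequality of M♮-concave functions:
for four items outside a set `Z`, the largest of the three sums `v (Z + x + y) + v (Z + x' + y')`
over the pairings `{{x, y}, {x', y'}}` of the four items is attained at least twice.

Write `Φ I J = S \ a(I) ∪ b(J)` (`swapSet`) and `w` for the edge weights (`swapWeight`). By strong
induction on `I`, `v S - v (Φ I I) = ∑ i ∈ I, w i i`. For `i ≠ j` in `I` and `M = I \ {i, j}`, two
exchange inequalities at `Φ I M` pin `v (Φ I I)` down to the diagonal values of `M`, `M + i` and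
`M + j`, provided the two mismatched sets `Φ (M + i) (M + j)` and `Φ (M + j) (M + i)` have smaller
total value. A second induction, again using the exchange inequality, bounds
`v S - v (Φ (M + i) (M + j))` below by the diagonal cost plus the reduced cost
`∑ (w s t - w s s)` of some walk from `i` to `j`. The two walks close up into a closed walk; it
splits into simple cycles, each of which is a permutation other than the identity and so has
positive reduced cost by uniqueness of the minimum matching.
-/

open Finset

def IsDemanded {α : Type*} (v : Finset α → ℝ) (p : α → ℝ) (S : Finset α) : Prop :=
  ∀ T, v T - ∑ j ∈ T, p j ≤ v S - ∑ j ∈ S, p j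

def GrossSubstitutes {α : Type*} (v : Finset α → ℝ) : Prop :=
  ∀ p p' : α → ℝ, (∀ j, p j ≤ p' j) → ∀ S, IsDemanded v p S →
    ∃ S', IsDemanded v p' S' ∧ ∀ j ∈ S, p j = p' j → j ∈ S'

section LocalExchange

variable {α : Type*} {v : Finset α → ℝ} {p : α → ℝ} {L : ℝ} {C R T U : Finset α} {x y z : α}

theorem IsDemanded.exists [Fintype α] (v : Finset α → ℝ) (p : α → ℝ) :
    ∃ S, IsDemanded v p S := by
  obtain ⟨S, -, hS⟩ := univ.exists_max_image (fun T => v T - ∑ j ∈ T, p j) univ_nonempty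
  exact ⟨S, fun T => hS T (mem_univ T)⟩

theorem exists_forall_sub_lt [Fintype α] (v : Finset α → ℝ) : ∃ L, ∀ T T', v T - v T' < L := by
  obtain ⟨P, -, hP⟩ := (univ : Finset (Finset α × Finset α)).exists_max_image
    (fun P => v P.1 - v P.2) univ_nonempty
  exact ⟨v P.1 - v P.2 + 1, fun T T' => by linarith [hP (T, T') (mem_univ _)]⟩

variable [DecidableEq α]

theorem IsDemanded.subset_of_forall_le_neg (hL : ∀ T T', v T - v T' < L) (hR : IsDemanded v p R)
    (hC : ∀ j ∈ C, p j ≤ -L) : C ⊆ R := by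
  intro e he
  by_contra heR
  have h := hR (insert e R)
  rw [sum_insert heR] at h
  linarith [hL R (insert e R), hC e he]

theorem IsDemanded.subset_of_forall_notMem_le (hL : ∀ T T', v T - v T' < L) (hR : IsDemanded v p R)
    (hU : ∀ j ∉ U, L ≤ p j) : R ⊆ U := by
  intro e heR
  by_contra he
  have h := hR (R.erase e)
  rw [← sum_erase_add R p heR] at h
  linarith [hL R (R.erase e), hU e he]

theorem IsDemanded.of_forall_subset_subset [Fintype α] (hL : ∀ T T', v T - v T' < L)
    (hC : ∀ j ∈ C, p j ≤ -L) (hU : ∀ j ∉ U, L ≤ p j)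
    (h : ∀ R, C ⊆ R → R ⊆ U → v R - ∑ j ∈ R, p j ≤ v T - ∑ j ∈ T, p j) :
    IsDemanded v p T := by
  obtain ⟨R, hR⟩ := IsDemanded.exists v p
  exact fun T' => (hR T').trans
    (h R (hR.subset_of_forall_le_neg hL hC) (hR.subset_of_forall_notMem_le hL hU))

theorem exists_eq_or_eq_insert (hC : C ⊆ R) (hR : R ⊆ insert x U) (hx : x ∉ C) :
    ∃ R', C ⊆ R' ∧ R' ⊆ U ∧ (R = R' ∨ R = insert x R') := by
  refine ⟨R.erase x, subset_erase.2 ⟨hC, hx⟩, subset_insert_iff.1 hR, ?_⟩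
  by_cases hxR : x ∈ R
  · exact .inr (insert_erase hxR).symm
  · exact .inl (erase_eq_of_notMem hxR).symm

theorem GrossSubstitutes.exists_isDemanded_price_out (hv : GrossSubstitutes v)
    (hL : ∀ T T', v T - v T' < L) (hT : IsDemanded v p T) (hC : ∀ j ∈ C, p j ≤ -L)
    (hU : ∀ j ∉ U, L ≤ p j) (hx : x ∉ C) :
    ∃ T', IsDemanded v (Function.update p x (max (p x) L)) T' ∧
      C ⊆ T' ∧ T' ⊆ U.erase x ∧ T.erase x ⊆ T' := by
  set p' := Function.update p x (max (p x) L)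
  have hp' : ∀ j, j ≠ x → p' j = p j := fun j hj => Function.update_of_ne hj _ _
  obtain ⟨T', hT', hkeep⟩ := hv p p' (fun j => by
    rcases eq_or_ne j x with rfl | hj
    · simp [p']
    · rw [hp' j hj]) T hT
  refine ⟨T', hT', hT'.subset_of_forall_le_neg hL fun j hj => ?_,
    hT'.subset_of_forall_notMem_le hL fun j hj => ?_,
    fun j hj => hkeep j (mem_of_mem_erase hj) (hp' j (ne_of_mem_erase hj)).symm⟩
  · rw [hp' j (ne_of_mem_of_not_mem hj hx)]
    exact hC j hj
  · rcases eq_or_ne j x with rfl | hjx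
    · simp [p']
    · rw [hp' j hjx]
      exact hU j fun h => hj (mem_erase.2 ⟨hjx, h⟩)

theorem GrossSubstitutes.submodular_pair [Fintype α] (hv : GrossSubstitutes v)
    (hx : x ∉ C) (hy : y ∉ C) (hxy : x ≠ y) :
    v (insert x (insert y C)) + v C ≤ v (insert x C) + v (insert y C) := by
  by_contra! h
  obtain ⟨L, hL⟩ := exists_forall_sub_lt v
  set δ := (v (insert x (insert y C)) + v C - v (insert x C) - v (insert y C)) / 2 with hδ
  let p : α → ℝ := fun j => if j ∈ C then -L else if j = x then v (insert x C) - v C + δ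
    else if j = y then v (insert y C) - v C + δ else L
  have hpC : ∀ j ∈ C, p j ≤ -L := fun j hj => by simp [p, hj]
  have hpU : ∀ j ∉ insert x (insert y C), L ≤ p j := fun j hj => by
    simp only [mem_insert, not_or] at hj
    simp [p, hj]
  have hT : IsDemanded v p (insert x (insert y C)) := by
    refine .of_forall_subset_subset hL hpC hpU fun R hCR hRU => ?_
    obtain ⟨R₁, hCR₁, hR₁, rfl | rfl⟩ := exists_eq_or_eq_insert hCR hRU hx <;>
    obtain ⟨R₂, hCR₂, hR₂, rfl | rfl⟩ := exists_eq_or_eq_insert hCR₁ hR₁ hy <;>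
    obtain rfl := hR₂.antisymm hCR₂ <;>
    simp only [mem_insert, or_self, not_false_eq_true, sum_insert, ↓reduceIte, hx, hy, hxy,
      hxy.symm, p] <;> linarith
  obtain ⟨T', hT', hCT', hT'U, hsub⟩ := hv.exists_isDemanded_price_out hL hT hpC hpU hx
  rw [erase_insert (by simp [hxy, hx])] at hT'U
  obtain rfl := hT'U.antisymm (insert_subset (hsub (by simp [hxy.symm])) hCT')
  have := hT' C
  simp only [↓reduceIte, not_false_eq_true, sum_insert, ne_eq, Function.update_of_ne, hy, hxy.symm,
    p] at this
  linarith

theorem GrossSubstitutes.exchange_triple [Fintype α] (hv : GrossSubstitutes v)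
    (hx : x ∉ C) (hy : y ∉ C) (hz : z ∉ C) (hxy : x ≠ y) (hxz : x ≠ z) (hyz : y ≠ z) :
    v (insert x (insert y C)) + v (insert z C) ≤
      max (v (insert x (insert z C)) + v (insert y C))
        (v (insert y (insert z C)) + v (insert x C)) := by
  by_contra! h
  obtain ⟨hxz_lt, hyz_lt⟩ := max_lt_iff.1 h
  have hsub_xy := hv.submodular_pair hx hy hxy
  have hsub_xz_y : v (insert x (insert y (insert z C))) + v (insert y C) ≤
      v (insert x (insert y C)) + v (insert y (insert z C)) := by
    have := hv.submodular_pair (C := insert y C) (x := x) (y := z) (by simp [hxy, hx])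
      (by simp [hyz.symm, hz]) hxz
    rwa [insert_comm z y] at this
  obtain ⟨t, ht₀, ht₁, ht₂⟩ : ∃ t : ℝ, 0 < t ∧
      t ≤ v (insert x (insert y C)) + v (insert z C) - v (insert x (insert z C)) - v (insert y C) ∧
      t ≤ v (insert x (insert y C)) + v (insert z C) - v (insert y (insert z C)) - v (insert x C) :=
    ⟨_, lt_min (by linarith) (by linarith), min_le_left _ _, min_le_right _ _⟩
  obtain ⟨L, hL⟩ := exists_forall_sub_lt v
  -- `C ∪ {x, y}` is demanded at `p`; once `x` is priced out, `y` stays demanded, yet `C ∪ {z}` is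
  -- then strictly better than both `C ∪ {y}` and `C ∪ {y, z}`.
  set N := v (insert x (insert y C)) - v (insert x C) - v (insert y C) + v C with hN
  let p : α → ℝ := fun j => if j ∈ C then -L
    else if j = x then v (insert x C) - v C + N - t / 2
    else if j = y then v (insert y C) - v C + N - t / 2
    else if j = z then v (insert z C) - v C + N - t
    else L
  have hpC : ∀ j ∈ C, p j ≤ -L := fun j hj => by simp [p, hj]
  have hpU : ∀ j ∉ insert x (insert y (insert z C)), L ≤ p j := fun j hj => by
    simp only [mem_insert, not_or] at hj
    simp [p, hj]
  have hT : IsDemanded v p (insert x (insert y C)) := by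
    refine .of_forall_subset_subset hL hpC hpU fun R hCR hRU => ?_
    obtain ⟨R₁, hCR₁, hR₁, rfl | rfl⟩ := exists_eq_or_eq_insert hCR hRU hx <;>
    obtain ⟨R₂, hCR₂, hR₂, rfl | rfl⟩ := exists_eq_or_eq_insert hCR₁ hR₁ hy <;>
    obtain ⟨R₃, hCR₃, hR₃, rfl | rfl⟩ := exists_eq_or_eq_insert hCR₂ hR₂ hz <;>
    obtain rfl := hR₃.antisymm hCR₃ <;>
    simp only [mem_insert, or_self, not_false_eq_true, sum_insert, ↓reduceIte, hx, hy, hz,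
      hxy, hxz, hyz, hxy.symm, hxz.symm, hyz.symm, p] <;> linarith
  obtain ⟨T', hT', hCT', hT'U, hsub⟩ := hv.exists_isDemanded_price_out hL hT hpC hpU hx
  rw [erase_insert (by simp [hxy, hxz, hx])] at hT'U
  have hyT' : y ∈ T' := hsub (by simp [hxy.symm])
  have key := hT' (insert z C)
  obtain ⟨R₁, hCR₁, hR₁, rfl | rfl⟩ := exists_eq_or_eq_insert hCT' hT'U hy <;>
  obtain ⟨R₂, hCR₂, hR₂, rfl | rfl⟩ := exists_eq_or_eq_insert hCR₁ hR₁ hz <;>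
  obtain rfl := hR₂.antisymm hCR₂ <;>
  simp only [mem_insert, or_self, or_false, not_false_eq_true, sum_insert, ne_eq, ↓reduceIte,
    Function.update_of_ne, hx, hy, hz, hyz, hxy.symm, hxz.symm, hyz.symm, p] at hyT' key <;>
  linarith

theorem GrossSubstitutes.exchange_quadruple [Fintype α] (hv : GrossSubstitutes v)
    {x₀ x₁ y₀ y₁ : α} (hx₀ : x₀ ∉ C) (hx₁ : x₁ ∉ C) (hy₀ : y₀ ∉ C) (hy₁ : y₁ ∉ C)
    (hx : x₀ ≠ x₁) (hy : y₀ ≠ y₁) (h₀₀ : x₀ ≠ y₀) (h₀₁ : x₀ ≠ y₁) (h₁₀ : x₁ ≠ y₀) (h₁₁ : x₁ ≠ y₁) :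
    v (insert x₀ (insert x₁ C)) + v (insert y₀ (insert y₁ C)) ≤
      max (v (insert x₀ (insert y₀ C)) + v (insert x₁ (insert y₁ C)))
        (v (insert x₀ (insert y₁ C)) + v (insert x₁ (insert y₀ C))) := by
  have h₀ := hv.exchange_triple hx₀ hx₁ hy₀ hx h₀₀ h₁₀
  have h₁ := hv.exchange_triple hx₀ hx₁ hy₁ hx h₀₁ h₁₁
  have h₂ := hv.exchange_triple hy₀ hy₁ hx₁ hy h₁₀.symm h₁₁.symm
  have h₃ := hv.exchange_triple hy₀ hy₁ hx₀ hy h₀₀.symm h₀₁.symm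
  rw [insert_comm y₀ x₁, insert_comm y₁ x₁] at h₂
  rw [insert_comm y₀ x₀, insert_comm y₁ x₀] at h₃
  rw [le_max_iff] at h₀ h₁ h₂ h₃ ⊢
  by_contra! h
  rcases h₀ with h₀ | h₀ <;> rcases h₁ with h₁ | h₁ <;> rcases h₂ with h₂ | h₂ <;>
    rcases h₃ with h₃ | h₃ <;> linarith

end LocalExchange

section Walks

variable {ι : Type*} (w : ι → ι → ℝ)

-- Each arc `s → t` contributes the cost of rematching `s` to `t` rather than to itself.
def walkCost : List ι → ℝ
  | x :: y :: l => (w x y - w x x) + walkCost (y :: l)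
  | _ => 0

theorem walkCost_cons_append_cons (a : ι) (l₁ : List ι) (c : ι) (l₂ : List ι) :
    walkCost w (a :: (l₁ ++ c :: l₂)) = walkCost w (a :: (l₁ ++ [c])) + walkCost w (c :: l₂) := by
  induction l₁ generalizing a with
  | nil => simp [walkCost]
  | cons b l ih => simp only [List.cons_append, walkCost, ih]; ring

theorem walkCost_eq_sum_of_isChain {σ : ι → ι} (y : ι) (m : List ι) (x : ι)
    (h : (y :: (m ++ [x])).IsChain fun s t => σ s = t) :
    walkCost w (y :: (m ++ [x])) = ((y :: m).map fun t => w t (σ t) - w t t).sum := by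
  induction m generalizing y with
  | nil => simp_all [walkCost]
  | cons z m ih =>
    rw [List.cons_append, List.isChain_cons_cons] at h
    simp [walkCost, ih z h.2, h.1]

theorem List.isChain_formPerm [DecidableEq ι] {x : ι} {l : List ι} (h : (x :: l).Nodup) :
    (x :: (l ++ [x])).IsChain fun s t => (x :: l).formPerm s = t := by
  rw [← List.cons_append, List.isChain_iff_getElem]
  intro i hi
  simp only [List.length_append, List.length_cons] at hi
  rcases (Nat.lt_succ_iff.1 (Nat.succ_lt_succ_iff.1 hi)).lt_or_eq with hi | rfl
  · rw [List.getElem_append_left (by simp; omega), List.getElem_append_left (by simp; omega)]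
    exact List.formPerm_apply_lt_getElem _ h i (by simp; omega)
  · rw [List.getElem_append_left (by simp), List.getElem_append_right (by simp)]
    simp

theorem walkCost_eq_sum_formPerm [Fintype ι] [DecidableEq ι] {x : ι} {l : List ι}
    (h : (x :: l).Nodup) :
    walkCost w (x :: (l ++ [x])) = ∑ t, (w t ((x :: l).formPerm t) - w t t) := by
  rw [walkCost_eq_sum_of_isChain w x l x (List.isChain_formPerm h), ← List.sum_toFinset _ h]
  refine Fintype.sum_subset fun t ht => ?_
  rw [List.mem_toFinset]
  refine List.mem_of_formPerm_apply_ne fun h' => ht ?_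
  rw [h', sub_self]

theorem List.exists_eq_append_cons_append_cons_of_not_nodup {l : List ι} (h : ¬l.Nodup) :
    ∃ P s Q R, l = P ++ s :: (Q ++ s :: R) := by
  induction l with
  | nil => exact absurd List.nodup_nil h
  | cons a l ih =>
    by_cases ha : a ∈ l
    · obtain ⟨Q, R, rfl⟩ := List.append_of_mem ha
      exact ⟨[], a, Q, R, rfl⟩
    · obtain ⟨P, s, Q, R, rfl⟩ := ih fun hl => h (List.nodup_cons.2 ⟨ha, hl⟩)
      exact ⟨a :: P, s, Q, R, rfl⟩

theorem walkCost_pos_of_isChain [Fintype ι] [DecidableEq ι]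
    (hw : ∀ σ : Equiv.Perm ι, σ ≠ 1 → ∑ t, w t t < ∑ t, w t (σ t))
    (x : ι) (l : List ι) (hl : (x :: (l ++ [x])).IsChain (· ≠ ·)) :
    0 < walkCost w (x :: (l ++ [x])) := by
  induction hn : l.length using Nat.strong_induction_on generalizing x l with
  | _ n ih =>
  by_cases hnd : (x :: l).Nodup
  · cases l with
    | nil => simp at hl
    | cons y l =>
      have hσ : (x :: y :: l).formPerm ≠ 1 := fun h1 =>
        (List.isChain_cons_cons.1 hl).1 (by simpa [h1] using List.formPerm_apply_head x y l hnd)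
      rw [walkCost_eq_sum_formPerm w hnd, sum_sub_distrib]
      linarith [hw _ hσ]
  rw [List.nodup_cons, not_and_or, not_not] at hnd
  rcases hnd with hx | hl'
  · obtain ⟨Q, R, rfl⟩ := List.append_of_mem hx
    simp only [List.append_assoc, List.cons_append, List.length_append, List.length_cons]
      at hl hn ⊢
    rw [List.isChain_cons_split] at hl
    rw [walkCost_cons_append_cons]
    exact add_pos (ih _ (by omega) x Q hl.1 rfl) (ih _ (by omega) x R hl.2 rfl)
  · obtain ⟨P, s, Q, R, rfl⟩ := List.exists_eq_append_cons_append_cons_of_not_nodup hl'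
    simp only [List.append_assoc, List.cons_append, List.length_append, List.length_cons]
      at hl hn ⊢
    obtain ⟨hxs, hsx⟩ := List.isChain_cons_split.1 hl
    obtain ⟨hss, hsx⟩ := List.isChain_cons_split.1 hsx
    have houter : 0 < walkCost w (x :: (P ++ s :: R ++ [x])) := by
      refine ih _ (by simp; omega) x _ ?_ rfl
      rw [List.append_assoc, List.cons_append, List.isChain_cons_split]
      exact ⟨hxs, hsx⟩
    rw [List.append_assoc, List.cons_append, walkCost_cons_append_cons] at houter
    rw [walkCost_cons_append_cons w x P s, walkCost_cons_append_cons w s Q s]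
    linarith [ih _ (by omega) s Q hss rfl]

def IsWalkCost (x y : ι) (c : ℝ) : Prop :=
  ∃ l : List ι, (x :: (l ++ [y])).IsChain (· ≠ ·) ∧ walkCost w (x :: (l ++ [y])) = c

variable {w}

theorem IsWalkCost.of_ne {x y : ι} (h : x ≠ y) : IsWalkCost w x y (w x y - w x x) :=
  ⟨[], by simpa using h, by simp [walkCost]⟩

theorem IsWalkCost.trans {x y z : ι} {c d : ℝ} (h₁ : IsWalkCost w x y c) (h₂ : IsWalkCost w y z d) :
    IsWalkCost w x z (c + d) := by
  obtain ⟨l₁, hl₁, rfl⟩ := h₁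
  obtain ⟨l₂, hl₂, rfl⟩ := h₂
  refine ⟨l₁ ++ y :: l₂, ?_, ?_⟩
  · rw [List.append_assoc, List.cons_append, List.isChain_cons_split]
    exact ⟨hl₁, hl₂⟩
  · rw [List.append_assoc, List.cons_append, walkCost_cons_append_cons]

theorem IsWalkCost.pos [Fintype ι] [DecidableEq ι]
    (hw : ∀ σ : Equiv.Perm ι, σ ≠ 1 → ∑ t, w t t < ∑ t, w t (σ t)) {x : ι} {c : ℝ}
    (h : IsWalkCost w x x c) : 0 < c := by
  obtain ⟨l, hl, rfl⟩ := h
  exact walkCost_pos_of_isChain w hw x l hl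

end Walks

section SwapSet

variable {α ι : Type*} [DecidableEq α]

def swapSet (S : Finset α) (a b : ι → α) (I J : Finset ι) : Finset α :=
  S \ I.image a ∪ J.image b

def swapWeight (v : Finset α → ℝ) (S : Finset α) (a b : ι → α) (i j : ι) : ℝ :=
  v S - v (insert (b j) (S.erase (a i)))

variable {S : Finset α} {a b : ι → α} {I J : Finset ι}

local notation "Φ" => swapSet S a b

theorem swapSet_insert_right [DecidableEq ι] (j : ι) :
    Φ I (insert j J) = insert (b j) (Φ I J) := by
  rw [swapSet, swapSet, image_insert, union_insert]

theorem swapSet_eq_insert_left [DecidableEq ι] (ha : Function.Injective a) (haS : ∀ i, a i ∈ S)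
    {i : ι} (hi : i ∉ I) : Φ I J = insert (a i) (Φ (insert i I) J) := by
  ext u
  by_cases hu : u = a i
  · subst hu
    simp [swapSet, ha.eq_iff, haS, hi]
  · simp [swapSet, hu]

theorem swapSet_singleton (i j : ι) : Φ {i} {j} = insert (b j) (S.erase (a i)) := by
  rw [swapSet, image_singleton, image_singleton, sdiff_singleton_eq_erase, union_comm, ← insert_eq]

theorem notMem_swapSet_left (haS : ∀ i, a i ∈ S) (hbS : ∀ j, b j ∉ S) {i : ι} (hi : i ∈ I) :
    a i ∉ Φ I J := by
  simp only [swapSet, mem_union, mem_sdiff, mem_image, not_or, not_and, not_exists]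
  exact ⟨fun _ h => h i hi rfl, fun j _ h => hbS j (h ▸ haS i)⟩

theorem notMem_swapSet_right (hb : Function.Injective b) (hbS : ∀ j, b j ∉ S) {j : ι}
    (hj : j ∉ J) :
    b j ∉ Φ I J := by
  simp only [swapSet, mem_union, mem_sdiff, mem_image, not_or, not_and, not_exists]
  exact ⟨fun h => absurd h (hbS j), fun j' hj' h => hj (hb h ▸ hj')⟩

theorem GrossSubstitutes.swapSet_exchange [Fintype α] [DecidableEq ι] {v : Finset α → ℝ}
    (hv : GrossSubstitutes v) (ha : Function.Injective a) (hb : Function.Injective b)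
    (haS : ∀ i, a i ∈ S) (hbS : ∀ j, b j ∉ S) {p q r s : ι}
    (hp : p ∉ I) (hq : q ∉ I) (hpq : p ≠ q) (hr : r ∉ J) (hs : s ∉ J) (hrs : r ≠ s) :
    v (Φ (insert p (insert q I)) (insert r (insert s J))) + v (Φ I J) ≤
        max (v (Φ (insert q I) (insert r J)) + v (Φ (insert p I) (insert s J)))
          (v (Φ (insert p I) (insert r J)) + v (Φ (insert q I) (insert s J))) ∧
      v (Φ (insert q I) (insert s J)) + v (Φ (insert p I) (insert r J)) ≤
        max (v (Φ (insert p (insert q I)) (insert r (insert s J))) + v (Φ I J))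
          (v (Φ (insert q I) (insert r J)) + v (Φ (insert p I) (insert s J))) := by
  set Z := Φ (insert p (insert q I)) J
  have hpqI : p ∉ insert q I := by simp [hpq, hp]
  have hqpI : q ∉ insert p I := by simp [hpq.symm, hq]
  have hIJ : Φ I J = insert (a p) (insert (a q) Z) := by
    rw [swapSet_eq_insert_left ha haS hq, swapSet_eq_insert_left ha haS hpqI,
      insert_comm]
  have hqI : Φ (insert q I) J = insert (a p) Z :=
    swapSet_eq_insert_left ha haS hpqI
  have hpI : Φ (insert p I) J = insert (a q) Z := by
    rw [swapSet_eq_insert_left ha haS hqpI, insert_comm q p]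
  simp only [swapSet_insert_right, hIJ, hqI, hpI]
  have hZ : ∀ i ∈ insert p (insert q I), a i ∉ Z := fun i hi => notMem_swapSet_left haS hbS hi
  have hab : ∀ i j, a i ≠ b j := fun i j h => hbS j (h ▸ haS i)
  have hap := hZ p (mem_insert_self _ _)
  have haq := hZ q (by simp)
  have hbr : b r ∉ Z := notMem_swapSet_right hb hbS hr
  have hbs : b s ∉ Z := notMem_swapSet_right hb hbS hs
  constructor
  · exact hv.exchange_quadruple hbr hbs hap haq (hb.ne hrs) (ha.ne hpq) (hab p r).symm
      (hab q r).symm (hab p s).symm (hab q s).symm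
  · have := hv.exchange_quadruple hbs hap hbr haq (hab p s).symm (hab q r).symm
      (hb.ne hrs.symm) (hab q s).symm (hab p r) (ha.ne hpq)
    rwa [insert_comm (b s) (b r), insert_comm (a p) (b r),
      add_comm (v (insert (b s) (insert (a q) Z)))] at this

end SwapSet

section Matching

variable {α ι : Type*} [DecidableEq α] [Fintype α] [DecidableEq ι] {v : Finset α → ℝ}
  {S : Finset α} {a b : ι → α}

local notation "Φ" => swapSet S a b

theorem GrossSubstitutes.exists_isWalkCost_le (hv : GrossSubstitutes v)
    (ha : Function.Injective a) (hb : Function.Injective b) (haS : ∀ i, a i ∈ S)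
    (hbS : ∀ j, b j ∉ S) (M : Finset ι)
    (hM : ∀ J ⊆ M, v S - v (Φ J J) = ∑ t ∈ J, swapWeight v S a b t t)
    {x y : ι} (hxy : x ≠ y) (hx : x ∉ M) (hy : y ∉ M) :
    ∃ c, IsWalkCost (swapWeight v S a b) x y c ∧
      ∑ t ∈ insert x M, swapWeight v S a b t t + c ≤
        v S - v (Φ (insert x M) (insert y M)) := by
  induction M using Finset.induction_on generalizing x y with
  | empty =>
    refine ⟨_, .of_ne hxy, ?_⟩
    simp [swapSet_singleton, swapWeight]
  | insert t N htN ih =>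
    have hN : ∀ J ⊆ N, v S - v (Φ J J) = ∑ t ∈ J, swapWeight v S a b t t :=
      fun J hJ => hM J (hJ.trans (subset_insert t N))
    rw [mem_insert, not_or] at hx hy
    obtain ⟨c₀, hc₀, hxy₀⟩ := ih hN hxy hx.2 hy.2
    obtain ⟨c₁, hc₁, hxt₁⟩ := ih hN hx.1 hx.2 htN
    obtain ⟨c₂, hc₂, hty₂⟩ := ih hN (Ne.symm hy.1) htN hy.2
    have hex := (hv.swapSet_exchange ha hb haS hbS hx.2 htN hx.1 hy.2 htN hy.1).1
    have hNN := hN N subset_rfl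
    have htt := hM (insert t N) subset_rfl
    have hxtN : x ∉ insert t N := by simp [hx.1, hx.2]
    simp only [sum_insert hxtN, sum_insert htN, sum_insert hx.2] at *
    rcases le_max_iff.1 hex with h | h
    · exact ⟨c₁ + c₂, hc₁.trans hc₂, by linarith⟩
    · exact ⟨c₀, hc₀, by linarith⟩

theorem GrossSubstitutes.sub_swapSet_eq_sum [Fintype ι] (hv : GrossSubstitutes v)
    (ha : Function.Injective a) (hb : Function.Injective b) (haS : ∀ i, a i ∈ S)
    (hbS : ∀ j, b j ∉ S)
    (hw : ∀ σ : Equiv.Perm ι, σ ≠ 1 →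
      ∑ t, swapWeight v S a b t t < ∑ t, swapWeight v S a b t (σ t))
    (I : Finset ι) : v S - v (Φ I I) = ∑ t ∈ I, swapWeight v S a b t t := by
  induction I using Finset.strongInduction with
  | H I ih =>
  rcases le_or_gt I.card 1 with hI | hI
  · rcases Nat.le_one_iff_eq_zero_or_eq_one.1 hI with h | h
    · simp [card_eq_zero.1 h, swapSet]
    · obtain ⟨i, rfl⟩ := card_eq_one.1 h
      simp [swapSet_singleton, swapWeight]
  obtain ⟨i, hi, j, hj, hij⟩ := one_lt_card.1 hI
  obtain ⟨M, hiM, hjM, rfl⟩ : ∃ M, i ∉ M ∧ j ∉ M ∧ I = insert i (insert j M) :=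
    ⟨(I.erase i).erase j, by simp, by simp,
      by rw [insert_erase (mem_erase.2 ⟨hij.symm, hj⟩), insert_erase hi]⟩
  have hlt : ∀ J ⊆ insert i (insert j M), i ∉ J ∨ j ∉ J → J ⊂ insert i (insert j M) :=
    fun J hJ h => (ssubset_iff_of_subset hJ).2 (h.elim (⟨i, by simp, ·⟩) (⟨j, by simp, ·⟩))
  have hM : ∀ J ⊆ M, v S - v (Φ J J) = ∑ t ∈ J, swapWeight v S a b t t :=
    fun J hJ => ih J (hlt J (hJ.trans (by grind)) (.inl fun h => hiM (hJ h)))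
  have hMM := hM M subset_rfl
  have hii := ih (insert i M) (hlt _ (by grind) (.inr (by simp [hij.symm, hjM])))
  have hjj := ih (insert j M) (hlt _ (by grind) (.inl (by simp [hij, hiM])))
  obtain ⟨c₁, hc₁, h₁⟩ := hv.exists_isWalkCost_le ha hb haS hbS M hM hij hiM hjM
  obtain ⟨c₂, hc₂, h₂⟩ := hv.exists_isWalkCost_le ha hb haS hbS M hM hij.symm hjM hiM
  have hpos := (hc₁.trans hc₂).pos hw
  obtain ⟨hq₁, hq₂⟩ := hv.swapSet_exchange ha hb haS hbS hiM hjM hij hiM hjM hij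
  have hijM : i ∉ insert j M := by simp [hij, hiM]
  simp only [sum_insert hijM, sum_insert hiM, sum_insert hjM] at *
  have hmis : v (Φ (insert j M) (insert i M)) + v (Φ (insert i M) (insert j M)) <
      v (Φ (insert i M) (insert i M)) + v (Φ (insert j M) (insert j M)) := by
    linarith
  rw [max_eq_right hmis.le] at hq₁
  have := (le_max_iff.1 hq₂).resolve_right (by linarith)
  linarith

end Matching

/-- **Unique Minimum Matching Lemma.** Let `v` be a gross substitutes valuation,
`S ⊆ [n]`, `A = {a 1, ..., a k} ⊆ S` and `B = {b 1, ..., b k} ⊆ [n] \ S`. Weight the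
bipartite graph on `A × B` by `w(aᵢ, bⱼ) = v(S) - v(S ∪ {bⱼ} \ {aᵢ})`. If the identity
matching `{(aᵢ, bᵢ)}` is the unique minimum-weight perfect matching, then
`v(S) - v(S ∪ B \ A) = ∑ᵢ (v(S) - v(S ∪ {bᵢ} \ {aᵢ}))`. -/
theorem unique_minimum_matching_lemma
    (n k : ℕ) (v : Finset (Fin n) → ℝ)
    (hGS : ∀ (p p' : Fin n → ℝ), (∀ j, p j ≤ p' j) →
      ∀ S : Finset (Fin n),
        (∀ T, v T - ∑ j ∈ T, p j ≤ v S - ∑ j ∈ S, p j) →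
        ∃ S', (∀ T, v T - ∑ j ∈ T, p' j ≤ v S' - ∑ j ∈ S', p' j) ∧
          ∀ j ∈ S, p j = p' j → j ∈ S')
    (S : Finset (Fin n)) (a b : Fin k → Fin n)
    (ha : Function.Injective a) (hb : Function.Injective b)
    (haS : ∀ i, a i ∈ S) (hbS : ∀ i, b i ∉ S)
    (huniq : ∀ σ : Equiv.Perm (Fin k), σ ≠ 1 →
      ∑ i, (v S - v (insert (b i) (S.erase (a i)))) <
        ∑ i, (v S - v (insert (b (σ i)) (S.erase (a i))))) :
    v S - v ((S \ Finset.image a Finset.univ) ∪ Finset.image b Finset.univ) =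
      ∑ i, (v S - v (insert (b i) (S.erase (a i)))) :=
  GrossSubstitutes.sub_swapSet_eq_sum hGS ha hb haS hbS huniq univ
end

section
/- Let G = (V,E,w) be a weighted directed graph with no negative-weight cycles, and let C be a cycle with minimum weight that, among minimum-weight cycles, has the fewest edges. Let M = {(u_1,v_1),...,(u_t,v_t)} be a set of pairwise non-consecutive edges of C. Then in the bipartite graph on {u_1,...,u_t} × {v_1,...,v_t} with edge weights inherited from G, M is the unique minimum-weight perfect matching. -/
/-! If `σ i ≠ i`, the chord `c (ι i) → c (ι (σ i) + 1)` closes the arc of `C` from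
`ι (σ i) + 1` back to `ι i` into a closed walk with fewer edges than `C`, so by minimality the
chord is strictly heavier than the arc of `C` it bypasses. That arc is the matching edge at `ι i`
followed by an arc from `ι i + 1` to `ι (σ i) + 1`, and since `w(C) ≥ 0` any arc from `x` to `y`
weighs at least `F y - F x`, where the potential `F y` is the weight of `C` from `c 0` to `c y`.
As `σ` permutes the endpoints, these potential differences sum to zero. -/

open Finset Fin.NatCast

section ClosedWalk

variable {V : Type*} (E : V → V → Prop) (w : V → V → ℝ)

def IsClosedWalk {n : ℕ} (c : Fin (n + 1) → V) : Prop :=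
  ∀ i, E (c i) (c (i + 1))

def closedWalkWeight {n : ℕ} (c : Fin (n + 1) → V) : ℝ :=
  ∑ i, w (c i) (c (i + 1))

def pathWeight (p : ℕ → V) (n : ℕ) : ℝ :=
  ∑ m ∈ range n, w (p m) (p (m + 1))

structure IsMinimalClosedWalk {L : ℕ} (c : Fin (L + 1) → V) : Prop where
  isClosedWalk : IsClosedWalk E c
  weight_le : ∀ (n : ℕ) (c' : Fin (n + 1) → V), IsClosedWalk E c' →
    closedWalkWeight w c ≤ closedWalkWeight w c'
  length_le : ∀ (n : ℕ) (c' : Fin (n + 1) → V), IsClosedWalk E c' →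
    closedWalkWeight w c' = closedWalkWeight w c → L ≤ n

variable {E w}

lemma IsMinimalClosedWalk.weight_lt_of_lt {L n : ℕ} {c : Fin (L + 1) → V}
    (hC : IsMinimalClosedWalk E w c) {c' : Fin (n + 1) → V} (hc' : IsClosedWalk E c')
    (hn : n < L) : closedWalkWeight w c < closedWalkWeight w c' :=
  (hC.weight_le n c' hc').lt_of_ne fun h => (hC.length_le n c' hc' h.symm).not_gt hn

lemma pathWeight_zero (p : ℕ → V) : pathWeight w p 0 = 0 := rfl

lemma pathWeight_succ (p : ℕ → V) (n : ℕ) :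
    pathWeight w p (n + 1) = pathWeight w p n + w (p n) (p (n + 1)) :=
  sum_range_succ _ _

lemma pathWeight_add (p : ℕ → V) (m n : ℕ) :
    pathWeight w p (m + n) = pathWeight w p m + pathWeight w (fun k => p (m + k)) n :=
  sum_range_add _ _ _

lemma isClosedWalk_of_path {p : ℕ → V} {n : ℕ} (hp : ∀ m < n, E (p m) (p (m + 1)))
    (hclose : E (p n) (p 0)) : IsClosedWalk E (fun j : Fin (n + 1) => p j) := by
  intro j
  dsimp only
  rw [Fin.val_add_one]
  split_ifs with h
  · simpa [h] using hclose
  · exact hp j (Fin.val_lt_last h)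

lemma closedWalkWeight_of_path (p : ℕ → V) (n : ℕ) :
    closedWalkWeight w (fun j : Fin (n + 1) => p j) = pathWeight w p n + w (p n) (p 0) := by
  rw [closedWalkWeight, Fin.sum_univ_castSucc, Fin.last_add_one, pathWeight,
    ← Fin.sum_univ_eq_sum_range]
  simp [Fin.coeSucc_eq_succ]

end ClosedWalk

lemma Fin.two_le_val_sub {n : ℕ} {a b : Fin (n + 1)} (h₀ : b ≠ a) (h₁ : b ≠ a + 1) :
    2 ≤ (b - a).val := by
  have hb : a + ((b - a).val : Fin (n + 1)) = b := by simp
  by_contra! h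
  interval_cases hd : (b - a).val
  · exact h₀ (by simpa using hb.symm)
  · exact h₁ (by simpa using hb.symm)

section Cycle

variable {V : Type*} {E : V → V → Prop} {w : V → V → ℝ} {L : ℕ} {c : Fin (L + 1) → V}

lemma closedWalkWeight_eq_pathWeight (c : Fin (L + 1) → V) (a : Fin (L + 1)) :
    closedWalkWeight w c = pathWeight w (fun k => c (a + k)) (L + 1) := by
  have hrot :
      closedWalkWeight w c = closedWalkWeight w (fun j : Fin (L + 1) => c (a + (j : ℕ))) := by
    simp only [closedWalkWeight, Fin.cast_val_eq_self, ← add_assoc]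
    exact (Equiv.sum_comp (Equiv.addLeft a) fun j => w (c j) (c (j + 1))).symm
  rw [hrot, closedWalkWeight_of_path (fun k => c (a + k)), pathWeight_succ, Nat.cast_succ,
    Fin.natCast_eq_last, Fin.last_add_one, Nat.cast_zero]

variable (w c) in
def potential (y : Fin (L + 1)) : ℝ :=
  pathWeight w (fun k => c k) y

lemma potential_add_one_sub_le (hW : 0 ≤ closedWalkWeight w c) (y : Fin (L + 1)) :
    potential w c (y + 1) - potential w c y ≤ w (c y) (c (y + 1)) := by
  by_cases hy : y = Fin.last L
  · have htotal := closedWalkWeight_eq_pathWeight (w := w) c 0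
    simp only [zero_add, pathWeight_succ, Nat.cast_succ, Fin.natCast_eq_last, Fin.last_add_one]
      at htotal
    subst hy
    simp only [potential, Fin.last_add_one, Fin.val_zero, pathWeight_zero, Fin.val_last]
    linarith
  · rw [potential, potential, Fin.val_add_one, if_neg hy, pathWeight_succ, Nat.cast_succ,
      Fin.cast_val_eq_self]
    simp

lemma potential_add_sub_le_pathWeight (hW : 0 ≤ closedWalkWeight w c) (a : Fin (L + 1))
    (n : ℕ) :
    potential w c (a + n) - potential w c a ≤ pathWeight w (fun k => c (a + k)) n := by
  induction n with
  | zero => simp [pathWeight_zero]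
  | succ n ih =>
    have hstep := potential_add_one_sub_le hW (a + n)
    rw [pathWeight_succ, Nat.cast_succ, ← add_assoc]
    linarith

lemma IsMinimalClosedWalk.pathWeight_lt_of_chord (hC : IsMinimalClosedWalk E w c)
    {a b : Fin (L + 1)} (hE : E (c a) (c b)) (hd : 2 ≤ (b - a).val) :
    pathWeight w (fun k => c (a + k)) (b - a).val < w (c a) (c b) := by
  set d := (b - a).val
  obtain ⟨n, hn⟩ : ∃ n, d + n = L + 1 := ⟨L + 1 - d, by omega⟩
  have had : a + (d : Fin (L + 1)) = b := by simp [d]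
  have hbn : b + (n : Fin (L + 1)) = a := by
    rw [← had, add_assoc, ← Nat.cast_add, hn, Fin.natCast_self, add_zero]
  have hshortcut : IsClosedWalk E (fun j : Fin (n + 1) => c (b + (j : ℕ))) :=
    isClosedWalk_of_path (p := fun k => c (b + k))
      (fun m _ => by simpa [add_assoc] using hC.isClosedWalk (b + m)) (by simpa [hbn] using hE)
  have hsplit := pathWeight_add (w := w) (fun k : ℕ => c (a + k)) d n
  rw [hn, ← closedWalkWeight_eq_pathWeight] at hsplit
  simp only [Nat.cast_add, ← add_assoc, had] at hsplit
  have hlt := hC.weight_lt_of_lt hshortcut (by omega)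
  rw [closedWalkWeight_of_path (fun k => c (b + k)), hbn, Nat.cast_zero, add_zero] at hlt
  linarith

lemma edge_add_potential_sub_le_pathWeight (hW : 0 ≤ closedWalkWeight w c) {a b : Fin (L + 1)}
    (hab : b ≠ a) :
    w (c a) (c (a + 1)) + (potential w c b - potential w c (a + 1)) ≤
      pathWeight w (fun k => c (a + k)) (b - a).val := by
  have hb : a + ((b - a).val : Fin (L + 1)) = b := by simp
  obtain ⟨d, hd⟩ : ∃ d, (b - a).val = 1 + d :=
    ⟨(b - a).val - 1, by
      have : (b - a).val ≠ 0 := fun h => hab (by rw [← hb, h, Nat.cast_zero, add_zero])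
      omega⟩
  rw [hd, Nat.cast_add, Nat.cast_one, ← add_assoc] at hb
  rw [hd, pathWeight_add, pathWeight_succ, pathWeight_zero]
  have hrest := potential_add_sub_le_pathWeight hW (a + 1) d
  rw [hb] at hrest
  simp only [Nat.cast_zero, add_zero, zero_add, Nat.cast_one, Nat.cast_add, ← add_assoc]
  linarith

lemma IsMinimalClosedWalk.edge_add_potential_sub_lt_chord (hC : IsMinimalClosedWalk E w c)
    (hW : 0 ≤ closedWalkWeight w c) {a b : Fin (L + 1)} (hE : E (c a) (c b)) (h₀ : b ≠ a)
    (h₁ : b ≠ a + 1) :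
    w (c a) (c (a + 1)) + (potential w c b - potential w c (a + 1)) < w (c a) (c b) :=
  (edge_add_potential_sub_le_pathWeight hW h₀).trans_lt
    (hC.pathWeight_lt_of_chord hE (Fin.two_le_val_sub h₀ h₁))

lemma IsMinimalClosedWalk.edge_add_potential_sub_le_chord (hC : IsMinimalClosedWalk E w c)
    (hW : 0 ≤ closedWalkWeight w c) {a b : Fin (L + 1)} (hE : E (c a) (c b)) (h₀ : b ≠ a) :
    w (c a) (c (a + 1)) + (potential w c b - potential w c (a + 1)) ≤ w (c a) (c b) := by
  obtain rfl | h₁ := eq_or_ne b (a + 1)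
  · simp
  · exact (hC.edge_add_potential_sub_lt_chord hW hE h₀ h₁).le

end Cycle

theorem min_cycle_unique_matching_general
    {V : Type*} (E : V → V → Prop) (w : V → V → ℝ)
    (hNoNeg : ∀ (L : ℕ) (c : Fin (L + 1) → V),
      (∀ i, E (c i) (c (i + 1))) → 0 ≤ ∑ i, w (c i) (c (i + 1)))
    (L : ℕ) (c : Fin (L + 1) → V)
    (hcyc : ∀ i, E (c i) (c (i + 1)))
    (hminw : ∀ (L' : ℕ) (c' : Fin (L' + 1) → V), (∀ i, E (c' i) (c' (i + 1))) →
      ∑ i, w (c i) (c (i + 1)) ≤ ∑ i, w (c' i) (c' (i + 1)))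
    (hminlen : ∀ (L' : ℕ) (c' : Fin (L' + 1) → V), (∀ i, E (c' i) (c' (i + 1))) →
      ∑ i, w (c' i) (c' (i + 1)) = ∑ i, w (c i) (c (i + 1)) → L ≤ L')
    (t : ℕ) (ι : Fin t → Fin (L + 1)) (hι : Function.Injective ι)
    (hnoncons : ∀ i j, ι j ≠ ι i + 1)
    (σ : Equiv.Perm (Fin t)) (hσ : σ ≠ 1)
    (hedges : ∀ i, E (c (ι i)) (c (ι (σ i) + 1))) :
    ∑ i, w (c (ι i)) (c (ι i + 1)) < ∑ i, w (c (ι i)) (c (ι (σ i) + 1)) := by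
  have hC : IsMinimalClosedWalk E w c := ⟨hcyc, hminw, hminlen⟩
  have hW : 0 ≤ closedWalkWeight w c := hNoNeg L c hcyc
  obtain ⟨i₀, hi₀⟩ : ∃ i, σ i ≠ i := not_forall.mp fun h => hσ (Equiv.ext h)
  have hne i : ι (σ i) + 1 ≠ ι i := fun h => hnoncons (σ i) i h.symm
  have hle i := hC.edge_add_potential_sub_le_chord hW (hedges i) (hne i)
  have hlt := hC.edge_add_potential_sub_lt_chord hW (hedges i₀) (hne i₀)
    fun h => hi₀ (hι (add_right_cancel h))
  have htelescope :
      ∑ i, (potential w c (ι (σ i) + 1) - potential w c (ι i + 1)) = 0 := by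
    rw [sum_sub_distrib, Equiv.sum_comp σ fun i => potential w c (ι i + 1), sub_self]
  calc ∑ i, w (c (ι i)) (c (ι i + 1))
      = ∑ i, (w (c (ι i)) (c (ι i + 1)) +
          (potential w c (ι (σ i) + 1) - potential w c (ι i + 1))) := by
        rw [sum_add_distrib, htelescope, add_zero]
    _ < ∑ i, w (c (ι i)) (c (ι (σ i) + 1)) :=
        sum_lt_sum (fun i _ => hle i) ⟨i₀, mem_univ _, hlt⟩

/-- Let `G` be a weighted directed graph with no negative-weight cycles, and let `C`
(encoded as `c : Fin (L+1) → V` with cyclic successor `i + 1`) be a minimum-weight cycle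
with the fewest edges among minimum-weight cycles. If `M = {(c (ι i), c (ι i + 1))}` is a
set of pairwise non-consecutive edges of `C`, then in the induced bipartite graph on the
tails and heads of `M`, the matching `M` is the unique minimum-weight perfect matching:
every other matching (given by a nontrivial permutation `σ` whose edges all exist in `G`)
has strictly larger weight. -/
theorem min_cycle_unique_matching
    {V : Type*} [Fintype V] (E : V → V → Prop) (w : V → V → ℝ)
    (hNoNeg : ∀ (L : ℕ) (c : Fin (L + 1) → V),
      (∀ i, E (c i) (c (i + 1))) → 0 ≤ ∑ i, w (c i) (c (i + 1)))
    (L : ℕ) (c : Fin (L + 1) → V) (hinj : Function.Injective c)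
    (hcyc : ∀ i, E (c i) (c (i + 1)))
    (hminw : ∀ (L' : ℕ) (c' : Fin (L' + 1) → V), (∀ i, E (c' i) (c' (i + 1))) →
      ∑ i, w (c i) (c (i + 1)) ≤ ∑ i, w (c' i) (c' (i + 1)))
    (hminlen : ∀ (L' : ℕ) (c' : Fin (L' + 1) → V), (∀ i, E (c' i) (c' (i + 1))) →
      ∑ i, w (c' i) (c' (i + 1)) = ∑ i, w (c i) (c (i + 1)) → L ≤ L')
    (t : ℕ) (ι : Fin t → Fin (L + 1)) (hι : Function.Injective ι)
    (hnoncons : ∀ i j, ι j ≠ ι i + 1)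
    (σ : Equiv.Perm (Fin t)) (hσ : σ ≠ 1)
    (hedges : ∀ i, E (c (ι i)) (c (ι (σ i) + 1))) :
    ∑ i, w (c (ι i)) (c (ι i + 1)) < ∑ i, w (c (ι i)) (c (ι (σ i) + 1)) :=
  min_cycle_unique_matching_general E w hNoNeg L c hcyc hminw hminlen t ι hι hnoncons σ hσ hedges
end
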